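/- arXiv:2509.19544 — 6 statements merged into one kernel-verified Lean document; each statement's English description precedes it below -/
import Mathlib

section
/- Let {A_n}_n be a matrix-sequence with A_n of size d_n. If there exist matrices R_n, N_n of size d_n such that A_n = R_n + N_n for all n, rank(R_n)/d_n → 0 and ‖N_n‖ → 0 as n → ∞ (‖·‖ the spectral norm), then {A_n}_n ~σ 0, i.e. {A_n}_n is zero-distributed. -/
open MeasureTheory Filter Topology

/-- The singular values of a square complex matrix `A`, i.e. the nonnegative square
roots of the eigenvalues of the Hermitian matrix `Aᴴ * A`. -/
noncomputable def singVals {m : Type*} [Fintype m] [DecidableEq m]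
    (A : Matrix m m ℂ) : m → ℝ :=
  fun i => Real.sqrt ((Matrix.isHermitian_conjTranspose_mul_self A).eigenvalues i)

/-- The spectral norm of a square complex matrix: its largest singular value. -/
noncomputable def specNorm {m : Type*} [Fintype m] [DecidableEq m]
    (A : Matrix m m ℂ) : ℝ := ⨆ i, singVals A i

/-- `{A n}ₙ ~σ 0`: the matrix-sequence `A` is zero-distributed. -/
def ZeroDistr (d : ℕ → ℕ) (A : ∀ n, Matrix (Fin (d n)) (Fin (d n)) ℂ) : Prop :=
  ∀ F : ℝ → ℂ, Continuous F → HasCompactSupport F →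
    Tendsto (fun n => (d n : ℂ)⁻¹ * ∑ i, F (singVals (A n) i)) atTop (𝓝 (F 0))

namespace ZDaux
open Matrix Complex
variable {m : Type*} [Fintype m] [DecidableEq m]

def sq2 (v : m → ℂ) : ℝ := ∑ i, Complex.normSq (v i)

lemma sq2_nonneg (v : m → ℂ) : 0 ≤ sq2 v :=
  Finset.sum_nonneg fun _ _ => Complex.normSq_nonneg _

lemma dot_star_self (v : m → ℂ) : star v ⬝ᵥ v = (sq2 v : ℂ) := by
  simp [dotProduct, sq2, Complex.normSq_eq_conj_mul_self]

lemma quad_eq (X : Matrix m m ℂ) (x : m → ℂ) :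
    star x ⬝ᵥ ((Xᴴ * X) *ᵥ x) = (sq2 (X *ᵥ x) : ℂ) := by
  rw [← mulVec_mulVec, dotProduct_mulVec, ← dot_star_self]
  congr 1
  rw [← star_mulVec]

lemma quad_eigen (M : Matrix m m ℂ) (hM : M.IsHermitian) (x : m → ℂ) :
    star x ⬝ᵥ (M *ᵥ x) =
      ((∑ i, hM.eigenvalues i *
        Complex.normSq ((star (hM.eigenvectorUnitary : Matrix m m ℂ) *ᵥ x) i) : ℝ) : ℂ) := by
  set U : Matrix m m ℂ := (hM.eigenvectorUnitary : Matrix m m ℂ) with hU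
  set y : m → ℂ := star U *ᵥ x with hy
  have hsy : star y = star x ᵥ* U := by
    rw [hy, star_mulVec, star_eq_conjTranspose, conjTranspose_conjTranspose]
  conv_lhs => rw [hM.spectral_theorem, Unitary.conjStarAlgAut_apply, ← hU]
  rw [← mulVec_mulVec, ← mulVec_mulVec, dotProduct_mulVec, ← hsy, ← hy]
  simp only [mulVec_diagonal, dotProduct, Pi.star_apply, Function.comp_apply]
  push_cast
  congr 1; funext i
  rw [Complex.normSq_eq_conj_mul_self]
  simp only [Complex.star_def]
  exact mul_left_comm ((starRingEnd ℂ) (y i)) ((hM.eigenvalues i : ℂ)) (y i)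

lemma sq2_star_unitary (U : Matrix m m ℂ) (hU : U ∈ Matrix.unitaryGroup m ℂ) (x : m → ℂ) :
    sq2 (star U *ᵥ x) = sq2 x := by
  have h1 : ((sq2 (star U *ᵥ x) : ℝ) : ℂ) = ((sq2 x : ℝ) : ℂ) := by
    rw [← dot_star_self, ← dot_star_self]
    have hsy : star (star U *ᵥ x) = star x ᵥ* U := by
      rw [star_mulVec, star_eq_conjTranspose, conjTranspose_conjTranspose]
    rw [hsy, ← dotProduct_mulVec, mulVec_mulVec,
      (Matrix.mem_unitaryGroup_iff).mp hU, one_mulVec]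
  exact_mod_cast h1

/-- representation of `sq2 (X *ᵥ x)` in the eigenbasis of `Xᴴ * X`. -/
lemma sq2_mulVec_repr (X : Matrix m m ℂ) (x : m → ℂ) :
    sq2 (X *ᵥ x) = ∑ i, (Matrix.isHermitian_conjTranspose_mul_self X).eigenvalues i *
      Complex.normSq ((star (((Matrix.isHermitian_conjTranspose_mul_self X).eigenvectorUnitary :
        Matrix m m ℂ)) *ᵥ x) i) := by
  have := (quad_eq X x).symm.trans (quad_eigen _ (Matrix.isHermitian_conjTranspose_mul_self X) x)
  exact_mod_cast this

lemma singVals_nonneg (X : Matrix m m ℂ) (i : m) : 0 ≤ singVals X i := Real.sqrt_nonneg _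

lemma sq_singVals (X : Matrix m m ℂ) (i : m) :
    singVals X i ^ 2 = (Matrix.isHermitian_conjTranspose_mul_self X).eigenvalues i :=
  Real.sq_sqrt (Matrix.eigenvalues_conjTranspose_mul_self_nonneg X i)

lemma singVals_le_specNorm (X : Matrix m m ℂ) (i : m) : singVals X i ≤ specNorm X :=
  le_ciSup (Set.Finite.bddAbove (Set.finite_range _)) i

lemma specNorm_nonneg [Nonempty m] (X : Matrix m m ℂ) : 0 ≤ specNorm X :=
  le_trans (singVals_nonneg X (Classical.arbitrary m)) (singVals_le_specNorm X _)

/-- operator norm bound -/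
lemma sq2_mulVec_le (X : Matrix m m ℂ) (x : m → ℂ) :
    sq2 (X *ᵥ x) ≤ specNorm X ^ 2 * sq2 x := by
  rw [sq2_mulVec_repr]
  set y := (star (((Matrix.isHermitian_conjTranspose_mul_self X).eigenvectorUnitary :
    Matrix m m ℂ)) *ᵥ x) with hy
  have hx : sq2 x = ∑ i, Complex.normSq (y i) := by
    rw [hy]
    exact (sq2_star_unitary _ (SetLike.coe_mem _) x).symm
  rw [hx, Finset.mul_sum]
  refine Finset.sum_le_sum fun i _ => ?_
  refine mul_le_mul_of_nonneg_right ?_ (Complex.normSq_nonneg _)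
  rw [← sq_singVals]
  exact pow_le_pow_left₀ (singVals_nonneg X i) (singVals_le_specNorm X i) 2


/-- At most `rank R` singular values of `R + N` exceed an operator bound `t` for `N`. -/
lemma card_lt_singVals_le_rank (Rm Nm : Matrix m m ℂ) (t : ℝ) (ht : 0 ≤ t)
    (hNb : ∀ x : m → ℂ, sq2 (Nm *ᵥ x) ≤ t ^ 2 * sq2 x) :
    (Finset.univ.filter fun i => t < singVals (Rm + Nm) i).card ≤ Rm.rank := by
  classical
  set A := Rm + Nm with hA
  set h := Matrix.isHermitian_conjTranspose_mul_self A with hh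
  set U : Matrix m m ℂ := (h.eigenvectorUnitary : Matrix m m ℂ) with hU
  set S := Finset.univ.filter fun i => t < singVals A i with hS
  -- extension-by-zero linear map
  let ext : (↥S → ℂ) →ₗ[ℂ] (m → ℂ) :=
    { toFun := fun c j => if hj : j ∈ S then c ⟨j, hj⟩ else 0
      map_add' := by
        intro c₁ c₂; funext j; by_cases hj : j ∈ S <;> simp [hj]
      map_smul' := by
        intro a c; funext j; by_cases hj : j ∈ S <;> simp [hj] }
  let φ : (↥S → ℂ) →ₗ[ℂ] (m → ℂ) := Rm.mulVecLin ∘ₗ (U.mulVecLin ∘ₗ ext)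
  have hinj : Function.Injective φ := by
    rw [← LinearMap.ker_eq_bot, LinearMap.ker_eq_bot']
    intro c hc
    by_contra hc0
    obtain ⟨i0, hi0⟩ : ∃ i, c i ≠ 0 := by
      by_contra hno
      push_neg at hno
      exact hc0 (funext hno)
    set e : m → ℂ := fun j => if hj : j ∈ S then c ⟨j, hj⟩ else 0 with he
    set x : m → ℂ := U *ᵥ e with hx
    have hyx : star U *ᵥ x = e := by
      rw [hx, mulVec_mulVec, (Matrix.mem_unitaryGroup_iff').mp (SetLike.coe_mem _), one_mulVec]
    have hRx : Rm *ᵥ x = 0 := hc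
    have hAx : A *ᵥ x = Nm *ᵥ x := by
      rw [hA, add_mulVec, hRx, zero_add]
    have hq : sq2 (A *ᵥ x) = ∑ j, h.eigenvalues j * Complex.normSq (e j) := by
      rw [sq2_mulVec_repr, ← hh, ← hU, hyx]
    have hx2 : sq2 x = ∑ j, Complex.normSq (e j) := by
      have := sq2_star_unitary U (SetLike.coe_mem _) x
      rw [hyx] at this
      rw [← this]; rfl
    have hlt : t ^ 2 * (∑ j, Complex.normSq (e j)) < ∑ j, h.eigenvalues j * Complex.normSq (e j) := by
      rw [Finset.mul_sum]
      refine Finset.sum_lt_sum (fun j _ => ?_) ⟨(i0 : m), Finset.mem_univ _, ?_⟩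
      · by_cases hj : j ∈ S
        · refine mul_le_mul_of_nonneg_right ?_ (Complex.normSq_nonneg _)
          have hts : t ≤ singVals A j := le_of_lt (Finset.mem_filter.mp hj).2
          calc t ^ 2 ≤ singVals A j ^ 2 := pow_le_pow_left₀ ht hts 2
            _ = h.eigenvalues j := sq_singVals A j
        · simp [he, hj]
      · have hiS : (i0 : m) ∈ S := i0.2
        have heq : e (i0 : m) = c i0 := by
          rw [he]; simp only [dif_pos hiS]
        have hpos : 0 < Complex.normSq (e (i0 : m)) := by
          rw [heq]; exact Complex.normSq_pos.mpr hi0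
        refine mul_lt_mul_of_pos_right ?_ hpos
        have hts : t < singVals A (i0 : m) := (Finset.mem_filter.mp hiS).2
        calc t ^ 2 < singVals A (i0 : m) ^ 2 := by
              exact pow_lt_pow_left₀ hts ht (by norm_num)
          _ = h.eigenvalues (i0 : m) := sq_singVals A (i0 : m)
    have hb : sq2 (A *ᵥ x) ≤ t ^ 2 * sq2 x := by rw [hAx]; exact hNb x
    rw [hq, hx2] at hb
    exact absurd hb (not_le.mpr hlt)
  calc S.card = Module.finrank ℂ (↥S → ℂ) := by
        rw [Module.finrank_fintype_fun_eq_card, Fintype.card_coe]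
    _ = Module.finrank ℂ (LinearMap.range φ) := (LinearMap.finrank_range_of_inj hinj).symm
    _ ≤ Module.finrank ℂ (LinearMap.range Rm.mulVecLin) :=
        Submodule.finrank_mono (LinearMap.range_comp_le_range _ _)
    _ = Rm.rank := rfl

end ZDaux

/-- if `A n = R n + N n` with `rank (R n) / d n → 0` and `‖N n‖ → 0`
(spectral norm), then `{A}ₙ` is zero-distributed. -/
theorem zero_distributed_of_rank_norm_split (d : ℕ → ℕ) (hd : StrictMono d)
    (A R N : ∀ n, Matrix (Fin (d n)) (Fin (d n)) ℂ)
    (hsum : ∀ n, A n = R n + N n)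
    (hR : Tendsto (fun n => ((R n).rank : ℝ) / d n) atTop (𝓝 0))
    (hN : Tendsto (fun n => specNorm (N n)) atTop (𝓝 0)) :
    ZeroDistr d A := by
  intro F hF hFc
  obtain ⟨C, hC⟩ := hFc.exists_bound_of_continuous hF
  have hC0 : 0 ≤ C := le_trans (norm_nonneg _) (hC 0)
  rw [Metric.tendsto_atTop]
  intro ε hε
  obtain ⟨δ, hδ0, hδ⟩ := Metric.continuousAt_iff.mp hF.continuousAt (ε/3) (by positivity)
  have hN' : ∀ᶠ n in atTop, specNorm (N n) < δ := by
    filter_upwards [Metric.tendsto_nhds.mp hN δ hδ0] with n hn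
    calc specNorm (N n) ≤ |specNorm (N n) - 0| := by
          rw [sub_zero]; exact le_abs_self _
      _ < δ := by simpa [Real.dist_eq] using hn
  have hden : 0 < ε / (3 * (2*C+1)) := by positivity
  have hR' : ∀ᶠ n in atTop, ((R n).rank : ℝ) / d n < ε / (3 * (2*C+1)) := by
    filter_upwards [Metric.tendsto_nhds.mp hR _ hden] with n hn
    rw [Real.dist_eq, sub_zero] at hn
    exact lt_of_le_of_lt (le_abs_self _) hn
  obtain ⟨n0, hn0⟩ := Filter.eventually_atTop.mp ((hN'.and hR').and (Filter.eventually_ge_atTop 1))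
  refine ⟨n0, fun n hn => ?_⟩
  obtain ⟨⟨h1, h2⟩, h3⟩ := hn0 n hn
  have hdpos : 0 < d n := lt_of_lt_of_le h3 (hd.le_apply)
  haveI : Nonempty (Fin (d n)) := ⟨⟨0, hdpos⟩⟩
  set t := specNorm (N n) with hts
  have ht0 : 0 ≤ t := ZDaux.specNorm_nonneg _
  set S := (Finset.univ.filter fun i => t < singVals (A n) i) with hSdef
  have hcard : S.card ≤ (R n).rank := by
    have := ZDaux.card_lt_singVals_le_rank (R n) (N n) t ht0
      (fun x => ZDaux.sq2_mulVec_le (N n) x)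
    rw [hSdef, hsum n]
    exact this
  have hDpos : (0:ℝ) < (d n : ℝ) := by exact_mod_cast hdpos
  rw [dist_eq_norm]
  have hrw : (d n:ℂ)⁻¹ * (∑ i, F (singVals (A n) i)) - F 0
      = (d n:ℂ)⁻¹ * ∑ i, (F (singVals (A n) i) - F 0) := by
    rw [Finset.sum_sub_distrib, mul_sub]
    congr 1
    rw [Finset.sum_const, Finset.card_univ, Fintype.card_fin, nsmul_eq_mul]
    rw [← mul_assoc, inv_mul_cancel₀ (by exact_mod_cast hdpos.ne' : (d n:ℂ) ≠ 0), one_mul]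
  rw [hrw]
  have hnorm : ‖(d n:ℂ)⁻¹ * ∑ i, (F (singVals (A n) i) - F 0)‖
      ≤ ((d n:ℝ))⁻¹ * ∑ i, ‖F (singVals (A n) i) - F 0‖ := by
    rw [norm_mul, norm_inv]
    refine mul_le_mul (le_of_eq ?_) (norm_sum_le _ _) (norm_nonneg _) (by positivity)
    simp
  refine lt_of_le_of_lt hnorm ?_
  -- split the sum
  have hsplit : ∑ i, ‖F (singVals (A n) i) - F 0‖
      = (∑ i ∈ S, ‖F (singVals (A n) i) - F 0‖)
        + ∑ i ∈ Finset.univ.filter (fun i => ¬ t < singVals (A n) i),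
            ‖F (singVals (A n) i) - F 0‖ := by
    rw [hSdef]
    exact (Finset.sum_filter_add_sum_filter_not _ _ _).symm
  have hb1 : ∑ i ∈ S, ‖F (singVals (A n) i) - F 0‖ ≤ (S.card : ℝ) * (2*C) := by
    rw [← nsmul_eq_mul]
    refine Finset.sum_le_card_nsmul _ _ _ fun i _ => ?_
    calc ‖F (singVals (A n) i) - F 0‖ ≤ ‖F (singVals (A n) i)‖ + ‖F 0‖ := norm_sub_le _ _
      _ ≤ C + C := add_le_add (hC _) (hC _)
      _ = 2*C := by ring
  have hb2 : ∑ i ∈ Finset.univ.filter (fun i => ¬ t < singVals (A n) i),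
      ‖F (singVals (A n) i) - F 0‖ ≤ (d n : ℝ) * (ε/3) := by
    calc ∑ i ∈ Finset.univ.filter (fun i => ¬ t < singVals (A n) i),
          ‖F (singVals (A n) i) - F 0‖
        ≤ ((Finset.univ.filter (fun i => ¬ t < singVals (A n) i)).card : ℝ) * (ε/3) := by
          rw [← nsmul_eq_mul]
          refine Finset.sum_le_card_nsmul _ _ _ fun i hi => ?_
          have hle : singVals (A n) i ≤ t := not_lt.mp (Finset.mem_filter.mp hi).2
          have hdist : dist (singVals (A n) i) 0 < δ := by
            rw [Real.dist_eq, sub_zero, abs_of_nonneg (ZDaux.singVals_nonneg _ _)]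
            exact lt_of_le_of_lt hle h1
          have := hδ hdist
          rw [dist_eq_norm] at this
          exact le_of_lt this
      _ ≤ (d n : ℝ) * (ε/3) := by
          refine mul_le_mul_of_nonneg_right ?_ (by positivity)
          have hcf := Finset.card_filter_le Finset.univ (fun i => ¬ t < singVals (A n) i)
          simp only [Finset.card_univ, Fintype.card_fin] at hcf
          exact_mod_cast hcf
  have hrd : ((R n).rank : ℝ) / (d n : ℝ) < ε / (3 * (2*C+1)) := h2
  have hScard : (S.card : ℝ) ≤ ((R n).rank : ℝ) := by exact_mod_cast hcard
  calc ((d n:ℝ))⁻¹ * ∑ i, ‖F (singVals (A n) i) - F 0‖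
      ≤ ((d n:ℝ))⁻¹ * (((R n).rank : ℝ) * (2*C) + (d n : ℝ) * (ε/3)) := by
        refine mul_le_mul_of_nonneg_left ?_ (by positivity)
        rw [hsplit]
        refine add_le_add (le_trans hb1 ?_) hb2
        exact mul_le_mul_of_nonneg_right hScard (by positivity)
    _ = (((R n).rank : ℝ) / (d n:ℝ)) * (2*C) + ε/3 := by
        field_simp
    _ < ε := by
        have h4 : (((R n).rank : ℝ) / (d n:ℝ)) * (2*C) < ε/3 := by
          have h5 : 0 ≤ ((R n).rank : ℝ) / (d n:ℝ) := by positivity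
          calc (((R n).rank : ℝ) / (d n:ℝ)) * (2*C)
              ≤ (((R n).rank : ℝ) / (d n:ℝ)) * (2*C+1) := by
                refine mul_le_mul_of_nonneg_left (by linarith) h5
            _ < (ε / (3 * (2*C+1))) * (2*C+1) := by
                refine mul_lt_mul_of_pos_right hrd (by linarith)
            _ = ε/3 := by field_simp
        linarith
end

section
/- Let {A_n}_n be a matrix-sequence with A_n of size d_n. If {A_n}_n ~σ 0 (i.e. {A_n}_n is zero-distributed), then there exist matrices R_n, N_n of size d_n such that A_n = R_n + N_n for all n, rank(R_n)/d_n → 0 and ‖N_n‖ → 0 as n → ∞ (‖·‖ the spectral norm). -/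
open MeasureTheory Filter Topology

lemma singVals_nonneg {m : Type*} [Fintype m] [DecidableEq m] (A : Matrix m m ℂ) (i : m) :
    0 ≤ singVals A i := Real.sqrt_nonneg _

lemma count_tendsto (d : ℕ → ℕ) (hd : StrictMono d)
    (A : ∀ n, Matrix (Fin (d n)) (Fin (d n)) ℂ) (h : ZeroDistr d A)
    {ε : ℝ} (hε : 0 < ε) :
    Tendsto (fun n => ((Finset.univ.filter (fun i => ε ≤ singVals (A n) i)).card : ℝ) / d n)
      atTop (𝓝 0) := by
  classical
  set f : ℝ → ℝ := fun x => max 0 (1 - |x| / ε) with hf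
  have hfc : Continuous f := continuous_const.max (by continuity)
  have hf0 : f 0 = 1 := by simp [hf]
  have hf1 : ∀ x, f x ≤ 1 := by
    intro x
    apply max_le (by norm_num)
    have : 0 ≤ |x| / ε := by positivity
    linarith
  have hfz : ∀ x, ε ≤ x → f x = 0 := by
    intro x hx
    have h1 : ε ≤ |x| := le_trans hx (le_abs_self x)
    have h2 : (1:ℝ) ≤ |x| / ε := (one_le_div hε).mpr h1
    exact max_eq_left (by linarith)
  have hfnn : ∀ x, 0 ≤ f x := fun x => le_max_left _ _
  have hF : Continuous (fun x => ((f x : ℝ) : ℂ)) := Complex.continuous_ofReal.comp hfc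
  have hsupp : HasCompactSupport (fun x => ((f x : ℝ) : ℂ)) := by
    apply HasCompactSupport.intro (isCompact_Icc (a := -ε) (b := ε))
    intro x hx
    simp only [Set.mem_Icc, not_and_or, not_le] at hx
    have hax : ε < |x| := by
      rw [lt_abs]
      rcases hx with h | h
      · right; linarith
      · left; exact h
    have : f x = 0 := by
      have h2 : (1:ℝ) < |x| / ε := (one_lt_div hε).mpr hax
      exact max_eq_left (by linarith)
    simp [this]
  have htendC := h _ hF hsupp
  set S : ℕ → ℝ := fun n => ∑ i, f (singVals (A n) i) with hS
  have hcast : ∀ n, (d n : ℂ)⁻¹ * ∑ i, ((f (singVals (A n) i) : ℝ) : ℂ)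
      = (((d n : ℝ)⁻¹ * S n : ℝ) : ℂ) := by
    intro n
    push_cast
    rw [hS]
    push_cast
    ring
  have htendR : Tendsto (fun n => (d n : ℝ)⁻¹ * S n) atTop (𝓝 1) := by
    have h2 : Tendsto (fun n => ((((d n : ℝ)⁻¹ * S n : ℝ)) : ℂ)) atTop (𝓝 ((1:ℝ):ℂ)) := by
      have : ((1:ℝ):ℂ) = (fun x => ((f x : ℝ) : ℂ)) 0 := by simp [hf0]
      rw [this]
      exact Tendsto.congr hcast htendC
    have h3 : Tendsto (fun n => ((((d n : ℝ)⁻¹ * S n : ℝ) : ℂ)).re) atTop (𝓝 (((1:ℝ) : ℂ)).re) :=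
      (Complex.continuous_re.tendsto _).comp h2
    simpa only [Complex.ofReal_re] using h3
  -- the key counting bound
  have hkey : ∀ n, 0 < (d n : ℝ) →
      ((Finset.univ.filter (fun i => ε ≤ singVals (A n) i)).card : ℝ) / d n
        ≤ 1 - (d n : ℝ)⁻¹ * S n := by
    intro n hdn
    have hsum : S n + ((Finset.univ.filter (fun i => ε ≤ singVals (A n) i)).card : ℝ)
        ≤ (d n : ℝ) := by
      have hcard : ((Finset.univ.filter (fun i => ε ≤ singVals (A n) i)).card : ℝ)
          = ∑ i : Fin (d n), (if ε ≤ singVals (A n) i then (1:ℝ) else 0) := by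
        rw [Finset.sum_boole]
      rw [hS, hcard, ← Finset.sum_add_distrib]
      calc (∑ i : Fin (d n), (f (singVals (A n) i) + if ε ≤ singVals (A n) i then (1:ℝ) else 0))
          ≤ ∑ _i : Fin (d n), (1:ℝ) := by
            apply Finset.sum_le_sum
            intro i _
            by_cases hi : ε ≤ singVals (A n) i
            · simp [hi, hfz _ hi]
            · simp only [hi, if_false, add_zero]
              exact hf1 _
        _ = (d n : ℝ) := by simp
    rw [div_le_iff₀ hdn]
    have : (1 - (d n : ℝ)⁻¹ * S n) * (d n : ℝ) = (d n : ℝ) - S n := by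
      field_simp
    rw [this]
    linarith
  have hupper : Tendsto (fun n => 1 - (d n : ℝ)⁻¹ * S n) atTop (𝓝 0) := by
    have := (tendsto_const_nhds (x := (1:ℝ)) (f := atTop (α := ℕ))).sub htendR
    simpa using this
  refine tendsto_of_tendsto_of_tendsto_of_le_of_le' (g := fun _ => (0:ℝ))
    tendsto_const_nhds hupper ?_ ?_
  · exact Eventually.of_forall (fun n => by positivity)
  · filter_upwards [eventually_ge_atTop 1] with n hn
    have : 0 < d n := lt_of_lt_of_le (Nat.lt_of_le_of_lt (Nat.zero_le _) (hd (Nat.lt_of_lt_of_le Nat.zero_lt_one hn))) (le_refl _)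
    exact hkey n (by exact_mod_cast this)

private def mkM (N : ℕ → ℕ) : ℕ → ℕ
  | 0 => N 0
  | k+1 => max (mkM N k + 1) (N (k+1))

lemma diag_select (c : ℕ → ℝ → ℝ) (hnn : ∀ n ε, 0 ≤ c n ε)
    (hlim : ∀ ε : ℝ, 0 < ε → Tendsto (fun n => c n ε) atTop (𝓝 0)) :
    ∃ t : ℕ → ℝ, (∀ n, 0 < t n) ∧ Tendsto t atTop (𝓝 0) ∧
      Tendsto (fun n => c n (t n)) atTop (𝓝 0) := by
  classical
  have H : ∀ k : ℕ, ∃ Nk : ℕ, ∀ n ≥ Nk, c n (1/((k:ℝ)+1)) < 1/((k:ℝ)+1) := by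
    intro k
    have hpos : (0:ℝ) < 1/((k:ℝ)+1) := by positivity
    have := (hlim _ hpos).eventually_lt_const hpos
    exact eventually_atTop.mp this
  choose N hN using H
  set M : ℕ → ℕ := mkM N with hMdef
  have hM0 : M 0 = N 0 := rfl
  have hMs : ∀ k, M (k+1) = max (M k + 1) (N (k+1)) := fun k => rfl
  have hMmono : StrictMono M := strictMono_nat_of_lt_succ (fun k => by
    rw [hMs]; exact lt_of_lt_of_le (Nat.lt_succ_self _) (le_max_left _ _))
  have hMN : ∀ k, N k ≤ M k := by
    intro k
    cases k with
    | zero => simp [hM0]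
    | succ k => rw [hMs]; exact le_max_right _ _
  set K : ℕ → ℕ := fun n => Nat.findGreatest (fun k => M k ≤ n) n with hK
  have hKspec : ∀ n, M 0 ≤ n → M (K n) ≤ n := by
    intro n hn
    exact Nat.findGreatest_spec (P := fun k => M k ≤ n) (Nat.zero_le n) hn
  have hKge : ∀ j n, M j ≤ n → j ≤ K n := by
    intro j n hj
    exact Nat.le_findGreatest (P := fun k => M k ≤ n) (le_trans hMmono.le_apply hj) hj
  have hKtop : Tendsto K atTop atTop := by
    apply tendsto_atTop_atTop.mpr
    intro b
    exact ⟨M b, fun n hn => hKge b n hn⟩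
  have h1 : Tendsto (fun k : ℕ => 1/((k:ℝ)+1)) atTop (𝓝 0) :=
    tendsto_one_div_add_atTop_nhds_zero_nat
  refine ⟨fun n => 1/((K n : ℝ)+1), fun n => by positivity, h1.comp hKtop, ?_⟩
  refine tendsto_of_tendsto_of_tendsto_of_le_of_le' (g := fun _ => (0:ℝ))
    tendsto_const_nhds (h1.comp hKtop) ?_ ?_
  · exact Eventually.of_forall (fun n => hnn _ _)
  · filter_upwards [eventually_ge_atTop (M 0)] with n hn
    have h2 := hKspec n hn
    have h3 : N (K n) ≤ n := le_trans (hMN _) h2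
    exact (hN (K n) n h3).le

open Matrix in
lemma matrix_split {m : Type*} [Fintype m] [DecidableEq m]
    (B : Matrix m m ℂ) {ε : ℝ} (hε : 0 < ε) :
    ∃ R N : Matrix m m ℂ, B = R + N ∧
      (R.rank : ℝ) ≤ (Finset.univ.filter (fun i => ε ≤ singVals B i)).card ∧
      specNorm N ≤ ε := by
  classical
  have hH : (Bᴴ * B).IsHermitian := Matrix.isHermitian_conjTranspose_mul_self B
  set V : Matrix m m ℂ := (hH.eigenvectorUnitary : Matrix m m ℂ) with hVdef
  have hV1 : V * star V = 1 := (Matrix.mem_unitaryGroup_iff).mp hH.eigenvectorUnitary.2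
  have hV2 : star V * V = 1 := (Matrix.mem_unitaryGroup_iff').mp hH.eigenvectorUnitary.2
  set small : m → Prop := fun i => hH.eigenvalues i < ε ^ 2 with hsmall
  set E : Matrix m m ℂ := Matrix.diagonal (fun i => if small i then (1 : ℂ) else 0) with hEdef
  set P : Matrix m m ℂ := V * E * star V with hPdef
  refine ⟨B - B * P, B * P, by abel, ?_, ?_⟩
  · -- rank bound
    set D' : Matrix m m ℂ := Matrix.diagonal (fun i => if small i then (0:ℂ) else 1) with hD'def
    have hED : (1 : Matrix m m ℂ) - E = D' := by
      rw [hEdef, hD'def, ← Matrix.diagonal_one, Matrix.diagonal_sub]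
      have : (fun i => (1:ℂ) - if small i then 1 else 0) = (fun i => if small i then (0:ℂ) else 1) := by
        funext i; by_cases h : small i <;> simp [h]
      rw [this]
    have hR : B - B * P = B * (V * D' * star V) := by
      have h1P : V * D' * star V = 1 - P := by
        rw [← hED, Matrix.mul_sub, Matrix.mul_one, Matrix.sub_mul, hV1, hPdef]
      rw [h1P, Matrix.mul_sub, Matrix.mul_one]
    have hle : (B - B * P).rank ≤ D'.rank := by
      rw [hR]
      calc (B * (V * D' * star V)).rank
          ≤ (V * D' * star V).rank := Matrix.rank_mul_le_right _ _
        _ ≤ (V * D').rank := Matrix.rank_mul_le_left _ _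
        _ ≤ _ := Matrix.rank_mul_le_right _ _
    have hdiag : D'.rank = (Finset.univ.filter (fun i => ε ≤ singVals B i)).card := by
      rw [hD'def, Matrix.rank_diagonal, Fintype.card_subtype]
      congr 1
      apply Finset.filter_congr
      intro i _
      have hnn : 0 ≤ hH.eigenvalues i := Matrix.eigenvalues_conjTranspose_mul_self_nonneg B i
      have h2 : (ε ≤ singVals B i) ↔ ¬ small i := by
        rw [hsmall]
        simp only [not_lt]
        exact (Real.le_sqrt hε.le hnn)
      rw [h2]
      by_cases h : small i <;> simp [h]
    calc ((B - B*P).rank : ℝ) ≤ (D'.rank : ℝ) := by exact_mod_cast hle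
      _ = _ := by rw [hdiag]
  · -- spectral norm bound
    set w : m → ℂ := fun i => if small i then ((hH.eigenvalues i : ℝ) : ℂ) else 0 with hwdef
    have hNN : (B * P)ᴴ * (B * P) = V * Matrix.diagonal w * star V := by
      have hE : Eᴴ = E := by
        rw [hEdef, Matrix.diagonal_conjTranspose]
        apply congrArg Matrix.diagonal
        funext i; by_cases h : small i <;> simp [h, Pi.star_apply]
      have hPH : Pᴴ = P := by
        rw [hPdef]
        simp only [Matrix.conjTranspose_mul, Matrix.conjTranspose_conjTranspose,
          Matrix.star_eq_conjTranspose]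
        rw [Matrix.mul_assoc, hE]
      have hspec : Bᴴ * B = V * Matrix.diagonal ((fun x : ℝ => (x:ℂ)) ∘ hH.eigenvalues) * star V :=
        hH.spectral_theorem
      have step1 : (B * P)ᴴ * (B * P) = P * (Bᴴ * B) * P := by
        rw [Matrix.conjTranspose_mul, hPH]
        simp only [Matrix.mul_assoc]
      have step2 : P * (Bᴴ * B) * P
          = V * (E * Matrix.diagonal ((fun x : ℝ => (x:ℂ)) ∘ hH.eigenvalues) * E) * star V := by
        have := congrArg (fun X => P * X * P) hspec
        rw [this, hPdef]
        have expand : V * E * star V * (V * Matrix.diagonal ((fun x : ℝ => (x:ℂ)) ∘ hH.eigenvalues) * star V) * (V * E * star V)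
            = V * (E * (star V * V) * Matrix.diagonal ((fun x : ℝ => (x:ℂ)) ∘ hH.eigenvalues) * (star V * V) * E) * star V := by
          simp only [Matrix.mul_assoc]
        rw [expand, hV2]
        simp only [Matrix.mul_one, Matrix.one_mul, Matrix.mul_assoc]
      have step3 : E * Matrix.diagonal ((fun x : ℝ => (x:ℂ)) ∘ hH.eigenvalues) * E
          = Matrix.diagonal w := by
        rw [hEdef, Matrix.diagonal_mul_diagonal, Matrix.diagonal_mul_diagonal]
        apply congrArg Matrix.diagonal
        funext i; by_cases h : small i <;> simp [h, hwdef]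
      rw [step1, step2, step3]
    have hbound : ∀ j, (Matrix.isHermitian_conjTranspose_mul_self (B * P)).eigenvalues j ≤ ε ^ 2 := by
      intro j
      set hM := Matrix.isHermitian_conjTranspose_mul_self (B * P)
      have hmem : hM.eigenvalues j ∈ spectrum ℝ ((B * P)ᴴ * (B * P)) :=
        hM.eigenvalues_mem_spectrum_real j
      set u : (Matrix m m ℂ)ˣ := ⟨V, star V, hV1, hV2⟩ with hu
      have hconj : spectrum ℝ ((B * P)ᴴ * (B * P)) = spectrum ℝ (Matrix.diagonal w) := by
        rw [hNN]
        have : V * Matrix.diagonal w * star V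
            = (u : Matrix m m ℂ) * Matrix.diagonal w * ((u⁻¹ : (Matrix m m ℂ)ˣ) : Matrix m m ℂ) := rfl
        rw [this, spectrum.units_conjugate]
      rw [hconj] at hmem
      have hmem' : ((hM.eigenvalues j : ℝ) : ℂ) ∈ spectrum ℂ (Matrix.diagonal w) := by
        have := (spectrum.algebraMap_mem_iff (R := ℝ)
          (a := Matrix.diagonal w) (r := hM.eigenvalues j) ℂ).mpr hmem
        simpa using this
      rw [spectrum_diagonal] at hmem'
      obtain ⟨i, hi⟩ := hmem'
      by_cases h : small i
      · have heq : ((hH.eigenvalues i : ℝ) : ℂ) = ((hM.eigenvalues j : ℝ) : ℂ) := by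
          rw [← hi]; simp [hwdef, h]
        have := Complex.ofReal_injective heq
        rw [← this]
        exact le_of_lt h
      · have h0c : (0 : ℂ) = ((hM.eigenvalues j : ℝ) : ℂ) := by rw [← hi]; simp [hwdef, h]
        have h0 : (0 : ℝ) = hM.eigenvalues j := by exact_mod_cast h0c
        rw [← h0]
        positivity
    apply Real.iSup_le _ hε.le
    intro j
    show Real.sqrt ((Matrix.isHermitian_conjTranspose_mul_self (B*P)).eigenvalues j) ≤ ε
    calc Real.sqrt ((Matrix.isHermitian_conjTranspose_mul_self (B*P)).eigenvalues j)
        ≤ Real.sqrt (ε ^ 2) := Real.sqrt_le_sqrt (hbound j)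
      _ = ε := by rw [Real.sqrt_sq hε.le]

/-- if `{A}ₙ` is zero-distributed then `A n = R n + N n` for suitable
matrices with `rank (R n) / d n → 0` and `‖N n‖ → 0` (spectral norm). -/
theorem rank_norm_split_of_zero_distributed (d : ℕ → ℕ) (hd : StrictMono d)
    (A : ∀ n, Matrix (Fin (d n)) (Fin (d n)) ℂ)
    (h : ZeroDistr d A) :
    ∃ R N : ∀ n, Matrix (Fin (d n)) (Fin (d n)) ℂ,
      (∀ n, A n = R n + N n) ∧
      Tendsto (fun n => ((R n).rank : ℝ) / d n) atTop (𝓝 0) ∧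
      Tendsto (fun n => specNorm (N n)) atTop (𝓝 0) := by
  classical
  obtain ⟨t, htpos, ht0, htc⟩ := diag_select
    (fun n ε => ((Finset.univ.filter (fun i => ε ≤ singVals (A n) i)).card : ℝ) / d n)
    (fun n ε => by positivity)
    (fun ε hε => count_tendsto d hd A h hε)
  choose R N hsum hrank hnorm using fun n => matrix_split (A n) (htpos n)
  refine ⟨R, N, hsum, ?_, ?_⟩
  · refine tendsto_of_tendsto_of_tendsto_of_le_of_le (g := fun _ => (0:ℝ))
      tendsto_const_nhds htc (fun n => by positivity) ?_
    intro n
    rcases Nat.eq_zero_or_pos (d n) with h0 | h0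
    · simp [h0]
    · have hdn : (0:ℝ) < d n := by exact_mod_cast h0
      exact (div_le_div_iff_of_pos_right hdn).mpr (hrank n)
  · refine tendsto_of_tendsto_of_tendsto_of_le_of_le (g := fun _ => (0:ℝ))
      tendsto_const_nhds ht0 (fun n => ?_) hnorm
    exact Real.iSup_nonneg (fun i => singVals_nonneg _ _)
end

section
/- Let {A_n}_n be a matrix-sequence with A_n of size d_n and let p ∈ [1, ∞). If ‖A_n‖_p / d_n^{1/p} → 0 as n → ∞, where ‖A‖_p = (Σ_{i=1}^{m} σ_i(A)^p)^{1/p} is the Schatten p-norm of an m×m matrix A, then {A_n}_n ~σ 0, i.e. {A_n}_n is zero-distributed. -/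
open MeasureTheory Filter Topology

/-- if `‖A n‖_p / (d n)^(1/p) → 0` for some `p ∈ [1, ∞)`, where
`‖A‖_p = (∑ i σ_i(A)^p)^(1/p)` is the Schatten `p`-norm, then `{A}ₙ` is
zero-distributed. -/
theorem zero_distributed_of_schatten (d : ℕ → ℕ) (hd : StrictMono d)
    (A : ∀ n, Matrix (Fin (d n)) (Fin (d n)) ℂ)
    (p : ℝ) (hp : 1 ≤ p)
    (h : Tendsto (fun n => (∑ i, singVals (A n) i ^ p) ^ (1 / p) / (d n : ℝ) ^ (1 / p))
      atTop (𝓝 0)) :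
    ZeroDistr d A := by
  intro F hF hFc
  obtain ⟨M, hM⟩ : ∃ M, ∀ x, ‖F x‖ ≤ M := hFc.exists_bound_of_continuous hF
  have hM0 : 0 ≤ M := le_trans (norm_nonneg _) (hM 0)
  have hp0 : (0:ℝ) < p := lt_of_lt_of_le one_pos hp
  set S : ℕ → ℝ := fun n => ∑ i, singVals (A n) i ^ p with hSdef
  have hSnn : ∀ n, 0 ≤ S n := fun n =>
    Finset.sum_nonneg fun i _ => Real.rpow_nonneg (Real.sqrt_nonneg _) p
  -- S n / d n → 0
  have ht : Tendsto (fun n => S n / (d n : ℝ)) atTop (𝓝 0) := by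
    have h2 : Tendsto (fun n => ((S n) ^ (1/p) / (d n : ℝ) ^ (1/p)) ^ p) atTop
        (𝓝 ((0:ℝ) ^ p)) := h.rpow_const (Or.inr hp0.le)
    rw [Real.zero_rpow hp0.ne'] at h2
    refine Tendsto.congr' ?_ h2
    filter_upwards [eventually_ge_atTop 1] with n hn
    have hdn : (0:ℝ) < d n := by
      have := hd.le_apply (x := n)
      exact_mod_cast lt_of_lt_of_le hn this
    rw [one_div, Real.div_rpow (Real.rpow_nonneg (hSnn n) _)
        (Real.rpow_nonneg hdn.le _), Real.rpow_inv_rpow (hSnn n) hp0.ne',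
      Real.rpow_inv_rpow hdn.le hp0.ne']
  rw [Metric.tendsto_nhds]
  intro ε hε
  obtain ⟨δ, hδ0, hδ⟩ := Metric.continuousAt_iff.mp (hF.continuousAt (x := 0))
    (ε/2) (by positivity)
  have hδp : (0:ℝ) < δ ^ p := Real.rpow_pos_of_pos hδ0 p
  set c : ℝ := 2 * M / δ ^ p with hcdef
  have hc0 : 0 ≤ c := by positivity
  have key : ∀ x : ℝ, 0 ≤ x → ‖F x - F 0‖ ≤ ε/2 + c * x ^ p := by
    intro x hx
    by_cases hxδ : x < δ
    · have h1 := hδ (x := x) (by simpa [Real.dist_eq, abs_of_nonneg hx] using hxδ)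
      rw [dist_eq_norm] at h1
      have h2 : 0 ≤ c * x ^ p := mul_nonneg hc0 (Real.rpow_nonneg hx p)
      linarith
    · push_neg at hxδ
      have h1 : ‖F x - F 0‖ ≤ 2 * M := by
        calc ‖F x - F 0‖ ≤ ‖F x‖ + ‖F 0‖ := norm_sub_le _ _
          _ ≤ M + M := add_le_add (hM x) (hM 0)
          _ = 2 * M := by ring
      have h2 : δ ^ p ≤ x ^ p := Real.rpow_le_rpow hδ0.le hxδ hp0.le
      have h3 : 2 * M ≤ c * x ^ p := by
        calc 2 * M = c * δ ^ p := by rw [hcdef, div_mul_cancel₀ _ hδp.ne']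
          _ ≤ c * x ^ p := mul_le_mul_of_nonneg_left h2 hc0
      linarith
  have hev : ∀ᶠ n in atTop, c * (S n / (d n : ℝ)) < ε / 2 := by
    have := (ht.const_mul c)
    rw [mul_zero] at this
    exact this.eventually_lt_const (by positivity)
  filter_upwards [eventually_ge_atTop 1, hev] with n hn hevn
  have hdn : (0:ℝ) < d n := by
    have := hd.le_apply (x := n)
    exact_mod_cast lt_of_lt_of_le hn this
  have hdC : (d n : ℂ) ≠ 0 := by exact_mod_cast hdn.ne'
  rw [dist_eq_norm]
  have heq : (d n : ℂ)⁻¹ * ∑ i, F (singVals (A n) i) - F 0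
      = (d n : ℂ)⁻¹ * ∑ i, (F (singVals (A n) i) - F 0) := by
    rw [Finset.sum_sub_distrib, mul_sub]
    congr 1
    rw [Finset.sum_const, Finset.card_univ, Fintype.card_fin, nsmul_eq_mul,
      ← mul_assoc, inv_mul_cancel₀ hdC, one_mul]
  rw [heq]
  have hnorm : ‖(d n : ℂ)⁻¹ * ∑ i, (F (singVals (A n) i) - F 0)‖
      ≤ (d n : ℝ)⁻¹ * ∑ i, ‖F (singVals (A n) i) - F 0‖ := by
    rw [norm_mul]
    have h1 : ‖((d n : ℂ))⁻¹‖ = (d n : ℝ)⁻¹ := by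
      simp [norm_inv]
    rw [h1]
    exact mul_le_mul_of_nonneg_left (norm_sum_le _ _) (by positivity)
  have hsum : (d n : ℝ)⁻¹ * ∑ i, ‖F (singVals (A n) i) - F 0‖
      ≤ (d n : ℝ)⁻¹ * ∑ i, (ε/2 + c * singVals (A n) i ^ p) := by
    refine mul_le_mul_of_nonneg_left (Finset.sum_le_sum fun i _ => ?_) (by positivity)
    exact key _ (Real.sqrt_nonneg _)
  have hfin : (d n : ℝ)⁻¹ * ∑ i, (ε/2 + c * singVals (A n) i ^ p)
      = ε/2 + c * (S n / (d n : ℝ)) := by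
    rw [Finset.sum_add_distrib, Finset.sum_const, Finset.card_univ, Fintype.card_fin,
      ← Finset.mul_sum, nsmul_eq_mul]
    simp only [hSdef]
    field_simp
  calc ‖(d n : ℂ)⁻¹ * ∑ i, (F (singVals (A n) i) - F 0)‖
      ≤ ε/2 + c * (S n / (d n : ℝ)) := by rw [← hfin]; exact le_trans hnorm hsum
    _ < ε/2 + ε/2 := by linarith
    _ = ε := by ring
end

section
/- Let {A_n}_n be a matrix-sequence with A_n of size d_n, let f : D → ℂ be a measurable function on a measurable set D ⊂ ℝ^t with 0 < μ_t(D) < ∞, and let S ⊆ ℂ. If {A_n}_n ~λ f and every eigenvalue of A_n belongs to S for all n, then f(x) belongs to the closure of S for almost every x ∈ D. -/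
open MeasureTheory Filter Topology

/-- The sum `∑ i F(λ_i(A))` of a function `F` over the eigenvalues of a square complex
matrix `A` (the roots of its characteristic polynomial, counted with multiplicity). -/
noncomputable def eigSum {m : Type*} [Fintype m] [DecidableEq m]
    (A : Matrix m m ℂ) (F : ℂ → ℂ) : ℂ := ((A.charpoly.roots).map F).sum

/-- `{A n}ₙ ~λ ψ`: the matrix-sequence `A` (with `A n` of size `d n`) has eigenvalue
distribution `ψ : D → ℂ`, `D ⊆ ℝᵗ`. -/
def HasEigDistr (d : ℕ → ℕ) (A : ∀ n, Matrix (Fin (d n)) (Fin (d n)) ℂ)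
    {t : ℕ} (D : Set (Fin t → ℝ)) (ψ : (Fin t → ℝ) → ℂ) : Prop :=
  ∀ F : ℂ → ℂ, Continuous F → HasCompactSupport F →
    Tendsto (fun n => (d n : ℂ)⁻¹ * eigSum (A n) F)
      atTop (𝓝 ((volume D).toReal⁻¹ • ∫ x in D, F (ψ x)))

/-- Key step: if a ball of radius `2r` around `z` misses `S`, then
`f⁻¹(closedBall z r) ∩ D` is null. -/
lemma eig_key {t : ℕ} (d : ℕ → ℕ)
    (A : ∀ n, Matrix (Fin (d n)) (Fin (d n)) ℂ)
    (D : Set (Fin t → ℝ)) (hD : MeasurableSet D)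
    (hD0 : 0 < volume D) (hDfin : volume D < ⊤)
    (f : (Fin t → ℝ) → ℂ) (hf : Measurable f)
    (S : Set ℂ)
    (hdist : HasEigDistr d A D f)
    (hspec : ∀ n, ∀ z ∈ (A n).charpoly.roots, z ∈ S)
    (z : ℂ) (r : ℝ) (hr : 0 < r)
    (hmiss : ∀ w ∈ S, 2 * r ≤ dist w z) :
    volume (D ∩ f ⁻¹' Metric.closedBall z r) = 0 := by
  classical
  set g : ℂ → ℝ := fun w => min 1 (max 0 (2 - dist w z / r)) with hg
  have hgc : Continuous g := by
    apply continuous_const.min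
    exact continuous_const.max (continuous_const.sub
      ((continuous_id.dist continuous_const).div_const r))
  have hg01 : ∀ w, 0 ≤ g w ∧ g w ≤ 1 := by
    intro w
    constructor
    · exact le_min zero_le_one (le_max_left _ _)
    · exact min_le_left _ _
  set F : ℂ → ℂ := fun w => (g w : ℂ) with hF
  have hFc : Continuous F := Complex.continuous_ofReal.comp hgc
  have hFzeroS : ∀ w ∈ S, F w = 0 := by
    intro w hw
    have h2 : 2 - dist w z / r ≤ 0 := by
      have := hmiss w hw
      have : 2 ≤ dist w z / r := by
        rw [le_div_iff₀ hr]; linarith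
      linarith
    simp only [hF, g]
    rw [max_eq_left h2, min_eq_right zero_le_one]
    simp
  have hFsupp : HasCompactSupport F := by
    apply HasCompactSupport.intro (isCompact_closedBall z (2 * r))
    intro w hw
    have hdw : 2 * r < dist w z := by
      simpa [Metric.mem_closedBall, not_le] using hw
    have h2 : 2 - dist w z / r ≤ 0 := by
      have : 2 < dist w z / r := by rw [lt_div_iff₀ hr]; linarith
      linarith
    simp only [hF, g]
    rw [max_eq_left h2, min_eq_right zero_le_one]
    simp
  have hzero : ∀ n, eigSum (A n) F = 0 := by
    intro n
    apply Multiset.sum_eq_zero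
    intro x hx
    rw [Multiset.mem_map] at hx
    obtain ⟨w, hw, rfl⟩ := hx
    exact hFzeroS w (hspec n w hw)
  have htend := hdist F hFc hFsupp
  have htend0 : Tendsto (fun n => (d n : ℂ)⁻¹ * eigSum (A n) F) atTop (𝓝 0) := by
    simp only [hzero, mul_zero]
    exact tendsto_const_nhds
  have hL : (volume D).toReal⁻¹ • ∫ x in D, F (f x) = 0 :=
    tendsto_nhds_unique htend htend0
  have hc : 0 < (volume D).toReal := ENNReal.toReal_pos hD0.ne' hDfin.ne
  have hI : ∫ x in D, F (f x) = 0 := by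
    rcases smul_eq_zero.mp hL with h | h
    · exact absurd h (ne_of_gt (inv_pos.mpr hc))
    · exact h
  have hIreal : ∫ x in D, F (f x) = (((∫ x in D, g (f x) : ℝ)) : ℂ) := integral_ofReal
  have hgint0 : ∫ x in D, g (f x) = 0 := by
    have := hIreal.symm.trans hI
    exact_mod_cast this
  -- integrability
  have hmeas : Measurable fun x => g (f x) := hgc.measurable.comp hf
  haveI : IsFiniteMeasure (volume.restrict D) :=
    ⟨by rwa [Measure.restrict_apply_univ]⟩
  have hint : IntegrableOn (fun x => g (f x)) D volume := by
    apply Integrable.mono' (integrable_const (1 : ℝ))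
      hmeas.aestronglyMeasurable
    filter_upwards with x
    rw [Real.norm_eq_abs, abs_of_nonneg (hg01 _).1]
    exact (hg01 _).2
  set E := D ∩ f ⁻¹' Metric.closedBall z r with hE
  have hEm : MeasurableSet E := hD.inter (hf (measurableSet_closedBall))
  have hEfin : volume E ≠ ⊤ := (lt_of_le_of_lt (measure_mono Set.inter_subset_left) hDfin).ne
  have h1 : (1 : ℝ) * (volume E).toReal ≤ ∫ x in E, g (f x) := by
    apply setIntegral_ge_of_const_le_real hEm hEfin
    · intro x hx
      have hdx : dist (f x) z ≤ r := hx.2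
      have : 1 ≤ 2 - dist (f x) z / r := by
        have : dist (f x) z / r ≤ 1 := by rw [div_le_one hr]; exact hdx
        linarith
      simp only [g]
      rw [max_eq_right (by linarith)]
      exact le_min le_rfl this
    · exact hint.mono_set Set.inter_subset_left
  have h2 : ∫ x in E, g (f x) ≤ ∫ x in D, g (f x) := by
    apply setIntegral_mono_set hint
    · filter_upwards with x using (hg01 _).1
    · exact HasSubset.Subset.eventuallyLE Set.inter_subset_left
  have : (volume E).toReal ≤ 0 := by
    rw [← hgint0]; calc (volume E).toReal = 1 * (volume E).toReal := (one_mul _).symm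
      _ ≤ ∫ x in E, g (f x) := h1
      _ ≤ ∫ x in D, g (f x) := h2
  have hle : (volume E).toReal = 0 := le_antisymm this ENNReal.toReal_nonneg
  exact (ENNReal.toReal_eq_zero_iff _).mp hle |>.resolve_right hEfin

/-- if `{A}ₙ ~λ f` and all eigenvalues of every `A n` lie in `S`, then
`f x ∈ closure S` for almost every `x ∈ D`. -/
theorem eig_symbol_range_subset_closure {t : ℕ} (d : ℕ → ℕ) (hd : StrictMono d)
    (A : ∀ n, Matrix (Fin (d n)) (Fin (d n)) ℂ)
    (D : Set (Fin t → ℝ)) (hD : MeasurableSet D)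
    (hD0 : 0 < volume D) (hDfin : volume D < ⊤)
    (f : (Fin t → ℝ) → ℂ) (hf : Measurable f)
    (S : Set ℂ)
    (hdist : HasEigDistr d A D f)
    (hspec : ∀ n, ∀ z ∈ (A n).charpoly.roots, z ∈ S) :
    ∀ᵐ x ∂(volume.restrict D), f x ∈ closure S := by
  classical
  rw [ae_restrict_iff' hD]
  rw [ae_iff]
  -- bad set
  set u : ℕ → ℂ := TopologicalSpace.denseSeq ℂ with hu
  have hudense : DenseRange u := TopologicalSpace.denseRange_denseSeq ℂ
  set R : ℕ → ℝ := fun j => ((j : ℝ) + 1)⁻¹ with hR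
  have hRpos : ∀ j, 0 < R j := fun j => by positivity
  set N : ℕ × ℕ → Set (Fin t → ℝ) := fun p =>
    if (∀ w ∈ S, 2 * R p.2 ≤ dist w (u p.1)) then
      D ∩ f ⁻¹' Metric.closedBall (u p.1) (R p.2) else ∅ with hN
  have hNnull : ∀ p, volume (N p) = 0 := by
    intro p
    simp only [hN]
    split_ifs with h
    · exact eig_key d A D hD hD0 hDfin f hf S hdist hspec (u p.1) (R p.2) (hRpos p.2) h
    · simp
  have hcover : {a | ¬(a ∈ D → f a ∈ closure S)} ⊆ ⋃ p, N p := by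
    intro x hx
    push_neg at hx
    obtain ⟨hxD, hxS⟩ := hx
    have hopen : IsOpen (closure S)ᶜ := isClosed_closure.isOpen_compl
    obtain ⟨ε, hε, hball⟩ := Metric.isOpen_iff.mp hopen (f x) hxS
    obtain ⟨j, hj⟩ := exists_nat_gt (3 / ε)
    have hjε : 3 * R j < ε := by
      have h3 : 3 / ε < (j : ℝ) + 1 := by linarith
      have h4 : ((j : ℝ) + 1)⁻¹ < (3 / ε)⁻¹ := by
        apply inv_strictAnti₀ (by positivity) h3
      have : R j < ε / 3 := by
        rw [hR]; rw [inv_div] at h4; exact h4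
      linarith
    obtain ⟨i, hi⟩ := hudense.exists_dist_lt (f x) (hRpos j)
    refine Set.mem_iUnion.mpr ⟨(i, j), ?_⟩
    simp only [hN]
    rw [if_pos]
    · exact ⟨hxD, by simpa [Metric.mem_closedBall, dist_comm] using hi.le⟩
    · intro w hw
      by_contra hlt
      push_neg at hlt
      have : dist w (f x) < ε := by
        calc dist w (f x) ≤ dist w (u i) + dist (u i) (f x) := dist_triangle _ _ _
          _ < 2 * R j + R j := by rw [dist_comm (u i)]; exact add_lt_add hlt hi
          _ = 3 * R j := by ring
          _ < ε := hjε
      exact (hball this) (subset_closure hw)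
  exact measure_mono_null hcover (measure_iUnion_null hNnull)
end

section
/- Let {A_n}_n be a matrix-sequence with A_n of size d_n and let f : D → ℂ be a measurable function on a measurable set D ⊂ ℝ^t with 0 < μ_t(D) < ∞. If {A_n}_n ~λ f and every A_n is Hermitian positive definite, then f(x) is real and nonnegative for almost every x ∈ D. -/
open MeasureTheory Filter Topology

open scoped ComplexOrder

lemma eval_charpoly_aux {m : ℕ} (M : Matrix (Fin m) (Fin m) ℂ) (z : ℂ) :
    M.charpoly.eval z = (Matrix.diagonal (fun _ => z) - M).det := by
  rw [Matrix.charpoly, ← Polynomial.coe_evalRingHom, RingHom.map_det]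
  congr 1
  ext i j
  by_cases h : i = j <;>
    simp [Matrix.charmatrix_apply, Matrix.diagonal, h]

/-- Roots of the characteristic polynomial of a positive definite complex matrix
are real and positive. -/
lemma root_real_pos {m : ℕ} {M : Matrix (Fin m) (Fin m) ℂ} (hM : M.PosDef)
    {z : ℂ} (hz : z ∈ M.charpoly.roots) : z.im = 0 ∧ 0 < z.re := by
  rw [Polynomial.mem_roots'] at hz
  have hdet : (Matrix.diagonal (fun _ => z) - M).det = 0 := by
    rw [← eval_charpoly_aux]; exact hz.2
  obtain ⟨v, hv0, hv⟩ := (Matrix.exists_mulVec_eq_zero_iff).mpr hdet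
  have hMv : M.mulVec v = z • v := by
    have := hv
    rw [Matrix.sub_mulVec] at this
    have hdiag : (Matrix.diagonal (fun _ => z)).mulVec v = z • v := by
      ext i; simp [Matrix.mulVec_diagonal]
    rw [hdiag] at this
    exact (sub_eq_zero.mp this).symm
  have h1 := hM.dotProduct_mulVec_pos hv0
  rw [hMv] at h1
  simp only [dotProduct_smul, smul_eq_mul] at h1
  have h2 : (0:ℂ) < dotProduct (star v) v :=
    Matrix.dotProduct_star_self_pos_iff.mpr hv0
  set c := dotProduct (star v) v with hc
  obtain ⟨hc1, hc2⟩ := Complex.lt_def.mp h2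
  obtain ⟨hz1, hz2⟩ := Complex.lt_def.mp h1
  simp only [Complex.zero_re, Complex.zero_im, Complex.mul_re, Complex.mul_im] at *
  rw [← hc2] at hz1 hz2
  simp only [mul_zero, zero_add, sub_zero] at hz1 hz2
  have him : z.im = 0 := by
    rcases mul_eq_zero.mp hz2.symm with h | h
    · exact h
    · exact absurd h hc1.ne'
  refine ⟨him, ?_⟩
  rcases mul_pos_iff.mp hz1 with ⟨h, _⟩ | ⟨_, h⟩
  · exact h
  · exact absurd h (not_lt.mpr hc1.le)


/-- if `{A}ₙ ~λ f` and every `A n` is Hermitian positive definite, then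
`f` is real and nonnegative almost everywhere on `D`. -/
theorem eig_symbol_nonneg_of_posDef {t : ℕ} (d : ℕ → ℕ) (hd : StrictMono d)
    (A : ∀ n, Matrix (Fin (d n)) (Fin (d n)) ℂ)
    (D : Set (Fin t → ℝ)) (hD : MeasurableSet D)
    (hD0 : 0 < volume D) (hDfin : volume D < ⊤)
    (f : (Fin t → ℝ) → ℂ) (hf : Measurable f)
    (hdist : HasEigDistr d A D f)
    (hpos : ∀ n, (A n).PosDef) :
    ∀ᵐ x ∂(volume.restrict D), (f x).im = 0 ∧ 0 ≤ (f x).re := by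
  classical
  set C : Set ℂ := {z | z.im = 0 ∧ 0 ≤ z.re} with hCdef
  have hCclosed : IsClosed C :=
    (isClosed_eq Complex.continuous_im continuous_const).inter
      (isClosed_le continuous_const Complex.continuous_re)
  have hCne : C.Nonempty := ⟨0, by simp [hCdef]⟩
  -- the family of test functions
  set g : ℕ → ℂ → ℝ := fun k z =>
    min (Metric.infDist z C) 1 * max ((k : ℝ) + 1 - ‖z‖) 0 with hgdef
  have hgcont : ∀ k, Continuous (g k) := fun k =>
    ((Metric.continuous_infDist_pt C).min continuous_const).mul
      ((continuous_const.sub continuous_norm).max continuous_const)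
  have hgnonneg : ∀ k z, 0 ≤ g k z := fun k z =>
    mul_nonneg (le_min (Metric.infDist_nonneg) zero_le_one) (le_max_right _ _)
  have hgC : ∀ k, ∀ z ∈ C, g k z = 0 := by
    intro k z hz
    simp [hgdef, Metric.infDist_zero_of_mem hz, min_eq_left (zero_le_one (α := ℝ))]
  have hgbound : ∀ k z, ‖g k z‖ ≤ (k : ℝ) + 1 := by
    intro k z
    rw [Real.norm_eq_abs, abs_of_nonneg (hgnonneg k z)]
    calc min (Metric.infDist z C) 1 * max ((k : ℝ) + 1 - ‖z‖) 0
        ≤ 1 * ((k : ℝ) + 1) := by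
          apply mul_le_mul (min_le_right _ _) ?_ (le_max_right _ _) zero_le_one
          exact max_le (by linarith [norm_nonneg z]) (by positivity)
      _ = (k : ℝ) + 1 := one_mul _
  set F : ℕ → ℂ → ℂ := fun k z => ((g k z : ℝ) : ℂ) with hFdef
  have hFcont : ∀ k, Continuous (F k) := fun k =>
    Complex.continuous_ofReal.comp (hgcont k)
  have hFsupp : ∀ k, HasCompactSupport (F k) := by
    intro k
    apply HasCompactSupport.intro (isCompact_closedBall (0 : ℂ) ((k : ℝ) + 1))
    intro z hz
    rw [Metric.mem_closedBall, not_le, dist_zero_right] at hz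
    have hm : max ((k : ℝ) + 1 - ‖z‖) 0 = 0 := max_eq_right (by linarith)
    have hz0 : g k z = 0 := by simp only [hgdef]; rw [hm, mul_zero]
    simp [hFdef, hz0]
  -- the eigenvalue sums vanish
  have hsum : ∀ k n, eigSum (A n) (F k) = 0 := by
    intro k n
    apply Multiset.sum_eq_zero
    intro x hx
    rw [Multiset.mem_map] at hx
    obtain ⟨z, hz, rfl⟩ := hx
    obtain ⟨him, hre⟩ := root_real_pos (hpos n) hz
    have : z ∈ C := ⟨him, hre.le⟩
    simp [hFdef, hgC k z this]
  -- hence each integral vanishes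
  haveI : IsFiniteMeasure (volume.restrict D) :=
    ⟨by rwa [Measure.restrict_apply_univ]⟩
  have hint : ∀ k, Integrable (fun x => g k (f x)) (volume.restrict D) := by
    intro k
    refine Integrable.mono' (integrable_const ((k : ℝ) + 1))
      (((hgcont k).measurable.comp hf).aestronglyMeasurable) ?_
    exact Eventually.of_forall fun x => hgbound k (f x)
  have hzero : ∀ k, ∀ᵐ x ∂(volume.restrict D), g k (f x) = 0 := by
    intro k
    have h1 := hdist (F k) (hFcont k) (hFsupp k)
    simp only [hsum k, mul_zero] at h1
    have h2 : ((volume D).toReal⁻¹ : ℝ) • ∫ x in D, F k (f x) = 0 :=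
      (tendsto_nhds_unique tendsto_const_nhds h1).symm
    have htR : (volume D).toReal ≠ 0 :=
      (ENNReal.toReal_pos hD0.ne' hDfin.ne).ne'
    have h3 : ∫ x in D, F k (f x) = 0 := by
      rcases smul_eq_zero.mp h2 with h | h
      · exact absurd h (inv_ne_zero htR)
      · exact h
    simp only [hFdef] at h3
    have h4 : ∫ x in D, (RCLike.ofReal (g k (f x)) : ℂ) = 0 := h3
    rw [integral_ofReal] at h4
    rw [show ((0:ℂ) = RCLike.ofReal (0:ℝ)) from by simp] at h4
    have h3' : ∫ x in D, g k (f x) = 0 := by exact_mod_cast h4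
    exact (integral_eq_zero_iff_of_nonneg
      (fun x => hgnonneg k (f x)) (hint k)).mp h3'
  -- combine over all k
  rw [← ae_all_iff] at hzero
  filter_upwards [hzero] with x hx
  by_contra hcon
  have hxC : f x ∉ C := hcon
  have hpos' : 0 < Metric.infDist (f x) C :=
    (hCclosed.notMem_iff_infDist_pos hCne).mp hxC
  obtain ⟨k, hk⟩ := exists_nat_gt ‖f x‖
  have h1 : 0 < min (Metric.infDist (f x) C) 1 := lt_min hpos' one_pos
  have h2 : 0 < max ((k : ℝ) + 1 - ‖f x‖) 0 :=
    lt_max_iff.mpr (Or.inl (by linarith))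
  exact (mul_pos h1 h2).ne' (hx k)
end

section
/- Let {A_n}_n and {B_n}_n be matrix-sequences with A_n, B_n of size d_n. (i) If {A_n}_n ~σ 0 and {B_n}_n ~σ 0, then {A_n + B_n}_n ~σ 0. (ii) If {A_n}_n ~σ 0 and there is a constant C with ‖B_n‖ ≤ C for all n (‖·‖ the spectral norm), then {A_n B_n}_n ~σ 0 and {B_n A_n}_n ~σ 0. -/
open MeasureTheory Filter Topology

namespace ZD

open Matrix Finset
open scoped InnerProductSpace

variable {m : Type*} [Fintype m] [DecidableEq m]

noncomputable def cnt (M : Matrix m m ℂ) (t : ℝ) : ℕ :=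
  (Finset.univ.filter fun i => t ≤ singVals M i).card

lemma singVals_nonneg (M : Matrix m m ℂ) (i : m) : 0 ≤ singVals M i := Real.sqrt_nonneg _

lemma sq_singVals (M : Matrix m m ℂ) (i : m) :
    singVals M i ^ 2 = (Matrix.isHermitian_conjTranspose_mul_self M).eigenvalues i :=
  Real.sq_sqrt (Matrix.eigenvalues_conjTranspose_mul_self_nonneg M i)

lemma toEuclideanLin_mul_apply (M N : Matrix m m ℂ) (x : EuclideanSpace ℂ m) :
    Matrix.toEuclideanLin (M * N) x = Matrix.toEuclideanLin M (Matrix.toEuclideanLin N x) := by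
  simp [Matrix.toEuclideanLin_apply, Matrix.mulVec_mulVec]

lemma apply_eigenvectorBasis (M : Matrix m m ℂ) (j : m) :
    Matrix.toEuclideanLin (Mᴴ * M) ((Matrix.isHermitian_conjTranspose_mul_self M).eigenvectorBasis j)
      = ((Matrix.isHermitian_conjTranspose_mul_self M).eigenvalues j : ℂ) •
        (Matrix.isHermitian_conjTranspose_mul_self M).eigenvectorBasis j := by
  set hH := Matrix.isHermitian_conjTranspose_mul_self M
  ext i
  have h := congrFun (hH.mulVec_eigenvectorBasis j) i
  simpa [Matrix.toEuclideanLin_apply, Complex.real_smul] using h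

lemma norm_sq_apply (M : Matrix m m ℂ) (x : EuclideanSpace ℂ m) :
    ‖Matrix.toEuclideanLin M x‖ ^ 2
      = ∑ j, (Matrix.isHermitian_conjTranspose_mul_self M).eigenvalues j *
          ‖(Matrix.isHermitian_conjTranspose_mul_self M).eigenvectorBasis.repr x j‖ ^ 2 := by
  set hH := Matrix.isHermitian_conjTranspose_mul_self M
  set b := hH.eigenvectorBasis
  have hLH : Matrix.toEuclideanLin (Mᴴ * M) x
      = ∑ j, b.repr x j • ((hH.eigenvalues j : ℂ) • b j) := by
    conv_lhs => rw [← b.sum_repr x]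
    rw [map_sum]
    exact Finset.sum_congr rfl fun j _ => by rw [_root_.map_smul, apply_eigenvectorBasis]
  have key : ⟪Matrix.toEuclideanLin M x, Matrix.toEuclideanLin M x⟫_ℂ
      = ((∑ j, hH.eigenvalues j * ‖b.repr x j‖ ^ 2 : ℝ) : ℂ) := by
    rw [show Matrix.toEuclideanLin (Mᴴ * M) x
        = Matrix.toEuclideanLin Mᴴ (Matrix.toEuclideanLin M x) from
      toEuclideanLin_mul_apply _ _ _] at hLH
    rw [← LinearMap.adjoint_inner_right]
    rw [← Matrix.toEuclideanLin_conjTranspose_eq_adjoint, hLH, inner_sum]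
    have hterm : ∀ j ∈ Finset.univ, ⟪x, b.repr x j • ((hH.eigenvalues j : ℂ) • b j)⟫_ℂ
        = ((hH.eigenvalues j * ‖b.repr x j‖ ^ 2 : ℝ) : ℂ) := by
      intro j _
      have h1 : ⟪x, b j⟫_ℂ = starRingEnd ℂ (b.repr x j) := by
        rw [b.repr_apply_apply, inner_conj_symm]
      rw [inner_smul_right, inner_smul_right, h1,
        show b.repr x j * ((hH.eigenvalues j : ℂ) * starRingEnd ℂ (b.repr x j))
          = (hH.eigenvalues j : ℂ) * (b.repr x j * starRingEnd ℂ (b.repr x j)) from by ring,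
        Complex.mul_conj]
      push_cast [Complex.normSq_eq_norm_sq]
      ring
    rw [Finset.sum_congr rfl hterm]
    push_cast
    ring
  rw [← inner_self_eq_norm_sq (𝕜 := ℂ), key, RCLike.re_to_complex, Complex.ofReal_re]

lemma norm_sq_repr {E : Type*} [NormedAddCommGroup E] [InnerProductSpace ℂ E]
    {ι : Type*} [Fintype ι] [DecidableEq ι] (b : OrthonormalBasis ι ℂ E) (x : E) :
    ‖x‖ ^ 2 = ∑ j, ‖b.repr x j‖ ^ 2 := by
  rw [← b.repr.norm_map x, EuclideanSpace.norm_eq, Real.sq_sqrt]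
  exact Finset.sum_nonneg fun j _ => by positivity

lemma repr_zero_of_span {E : Type*} [NormedAddCommGroup E] [InnerProductSpace ℂ E]
    {ι : Type*} [Fintype ι] [DecidableEq ι] (b : OrthonormalBasis ι ℂ E) (S : Finset ι)
    {x : E} (hx : x ∈ Submodule.span ℂ (⇑b '' ↑S)) {j : ι} (hj : j ∉ S) :
    b.repr x j = 0 := by
  have hle : Submodule.span ℂ (⇑b '' ↑S) ≤ LinearMap.ker (innerSL ℂ (b j)).toLinearMap := by
    rw [Submodule.span_le]
    rintro _ ⟨i, hi, rfl⟩
    have hne : j ≠ i := fun h => hj (h ▸ hi)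
    simpa using b.orthonormal.2 hne
  have : ⟪b j, x⟫_ℂ = 0 := hle hx
  rw [b.repr_apply_apply, this]

lemma norm_sq_apply_of_mem (M : Matrix m m ℂ) (S : Finset m) {x : EuclideanSpace ℂ m}
    (hx : x ∈ Submodule.span ℂ
      (⇑(Matrix.isHermitian_conjTranspose_mul_self M).eigenvectorBasis '' ↑S)) :
    ‖Matrix.toEuclideanLin M x‖ ^ 2
      = ∑ j ∈ S, (Matrix.isHermitian_conjTranspose_mul_self M).eigenvalues j *
          ‖(Matrix.isHermitian_conjTranspose_mul_self M).eigenvectorBasis.repr x j‖ ^ 2 := by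
  rw [norm_sq_apply]
  exact (Finset.sum_subset (Finset.subset_univ S) fun j _ hj => by
    rw [repr_zero_of_span _ S hx hj]; simp).symm

lemma norm_sq_self_of_mem {E : Type*} [NormedAddCommGroup E] [InnerProductSpace ℂ E]
    {ι : Type*} [Fintype ι] [DecidableEq ι] (b : OrthonormalBasis ι ℂ E) (S : Finset ι)
    {x : E} (hx : x ∈ Submodule.span ℂ (⇑b '' ↑S)) :
    ‖x‖ ^ 2 = ∑ j ∈ S, ‖b.repr x j‖ ^ 2 := by
  rw [norm_sq_repr b]
  exact (Finset.sum_subset (Finset.subset_univ S) fun j _ hj => by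
    rw [repr_zero_of_span _ S hx hj]; simp).symm

lemma finrank_span_basis_image {E : Type*} [NormedAddCommGroup E] [InnerProductSpace ℂ E]
    {ι : Type*} [Fintype ι] [DecidableEq ι] (b : OrthonormalBasis ι ℂ E) (S : Finset ι) :
    Module.finrank ℂ (Submodule.span ℂ (⇑b '' ↑S)) = S.card := by
  have hli : LinearIndependent ℂ (fun i : S => b i) :=
    b.orthonormal.linearIndependent.comp Subtype.val Subtype.val_injective
  have h := finrank_span_eq_card hli
  rw [show Set.range (fun i : S => b i) = ⇑b '' ↑S from (Set.image_eq_range _ _).symm] at h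
  rw [h, Fintype.card_coe]

lemma norm_le_of_mem_small (M : Matrix m m ℂ) {t : ℝ} (ht : 0 ≤ t) {x : EuclideanSpace ℂ m}
    (hx : x ∈ Submodule.span ℂ
      (⇑(Matrix.isHermitian_conjTranspose_mul_self M).eigenvectorBasis ''
        ↑(Finset.univ.filter fun i => singVals M i < t))) :
    ‖Matrix.toEuclideanLin M x‖ ≤ t * ‖x‖ := by
  set b := (Matrix.isHermitian_conjTranspose_mul_self M).eigenvectorBasis
  have h1 : ‖Matrix.toEuclideanLin M x‖ ^ 2 ≤ (t * ‖x‖) ^ 2 := by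
    rw [norm_sq_apply_of_mem M _ hx]
    calc ∑ j ∈ Finset.univ.filter (fun i => singVals M i < t),
          (Matrix.isHermitian_conjTranspose_mul_self M).eigenvalues j * ‖b.repr x j‖ ^ 2
        ≤ ∑ j ∈ Finset.univ.filter (fun i => singVals M i < t), t ^ 2 * ‖b.repr x j‖ ^ 2 := by
          refine Finset.sum_le_sum fun j hj => ?_
          have hj' : singVals M j < t := (Finset.mem_filter.mp hj).2
          have : (Matrix.isHermitian_conjTranspose_mul_self M).eigenvalues j ≤ t ^ 2 := by
            rw [← sq_singVals]
            exact pow_le_pow_left₀ (singVals_nonneg M j) hj'.le 2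
          exact mul_le_mul_of_nonneg_right this (by positivity)
      _ ≤ ∑ j, t ^ 2 * ‖b.repr x j‖ ^ 2 := by
          exact Finset.sum_le_sum_of_subset_of_nonneg (Finset.subset_univ _)
            fun j _ _ => by positivity
      _ = (t * ‖x‖) ^ 2 := by rw [← Finset.mul_sum, ← norm_sq_repr b]; ring
  have := Real.sqrt_le_sqrt h1
  rwa [Real.sqrt_sq (norm_nonneg _), Real.sqrt_sq (by positivity)] at this

lemma mul_norm_le_of_mem_large (M : Matrix m m ℂ) {t : ℝ} (ht : 0 ≤ t) {x : EuclideanSpace ℂ m}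
    (hx : x ∈ Submodule.span ℂ
      (⇑(Matrix.isHermitian_conjTranspose_mul_self M).eigenvectorBasis ''
        ↑(Finset.univ.filter fun i => t ≤ singVals M i))) :
    t * ‖x‖ ≤ ‖Matrix.toEuclideanLin M x‖ := by
  set b := (Matrix.isHermitian_conjTranspose_mul_self M).eigenvectorBasis
  have h1 : (t * ‖x‖) ^ 2 ≤ ‖Matrix.toEuclideanLin M x‖ ^ 2 := by
    rw [norm_sq_apply_of_mem M _ hx,
      show (t * ‖x‖) ^ 2 = t ^ 2 * ‖x‖ ^ 2 from by ring,
      norm_sq_self_of_mem b _ hx, Finset.mul_sum]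
    refine Finset.sum_le_sum fun j hj => ?_
    have hj' : t ≤ singVals M j := (Finset.mem_filter.mp hj).2
    have : t ^ 2 ≤ (Matrix.isHermitian_conjTranspose_mul_self M).eigenvalues j := by
      rw [← sq_singVals]
      exact pow_le_pow_left₀ ht hj' 2
    exact mul_le_mul_of_nonneg_right this (by positivity)
  have := Real.sqrt_le_sqrt h1
  rwa [Real.sqrt_sq (norm_nonneg _), Real.sqrt_sq (by positivity)] at this

lemma cnt_add_finrank_le (M : Matrix m m ℂ) {c t : ℝ} (hc : 0 ≤ c) (hct : c < t)
    (W : Submodule ℂ (EuclideanSpace ℂ m))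
    (hW : ∀ x ∈ W, ‖Matrix.toEuclideanLin M x‖ ≤ c * ‖x‖) :
    cnt M t + Module.finrank ℂ W ≤ Fintype.card m := by
  classical
  set b := (Matrix.isHermitian_conjTranspose_mul_self M).eigenvectorBasis
  set S := Finset.univ.filter fun i => t ≤ singVals M i with hS
  set U := Submodule.span ℂ (⇑b '' ↑S) with hUdef
  have hU : Module.finrank ℂ U = S.card := finrank_span_basis_image b S
  by_contra hcon
  push_neg at hcon
  have h1 : Module.finrank ℂ ↥(U ⊔ W) + Module.finrank ℂ ↥(U ⊓ W)
      = Module.finrank ℂ U + Module.finrank ℂ W :=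
    Submodule.finrank_sup_add_finrank_inf_eq U W
  have h2 : Module.finrank ℂ ↥(U ⊔ W) ≤ Fintype.card m := by
    have := Submodule.finrank_le (U ⊔ W)
    rwa [finrank_euclideanSpace] at this
  have hcnt : cnt M t = S.card := rfl
  have hpos : 0 < Module.finrank ℂ ↥(U ⊓ W) := by omega
  have : Nontrivial ↥(U ⊓ W) := Module.nontrivial_of_finrank_pos hpos
  obtain ⟨x, hx0⟩ := exists_ne (0 : ↥(U ⊓ W))
  have hxU : (x : EuclideanSpace ℂ m) ∈ U := x.2.1
  have hxW : (x : EuclideanSpace ℂ m) ∈ W := x.2.2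
  have hx1 : t * ‖(x : EuclideanSpace ℂ m)‖ ≤ ‖Matrix.toEuclideanLin M x‖ :=
    mul_norm_le_of_mem_large M (hc.trans hct.le) hxU
  have hx2 : ‖Matrix.toEuclideanLin M (x : EuclideanSpace ℂ m)‖ ≤ c * ‖(x : EuclideanSpace ℂ m)‖ :=
    hW x hxW
  have hxn : 0 < ‖(x : EuclideanSpace ℂ m)‖ := by
    rw [norm_pos_iff]
    exact fun h => hx0 (Subtype.ext h)
  nlinarith

lemma exists_small_space (M : Matrix m m ℂ) {t : ℝ} (ht : 0 ≤ t) :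
    ∃ W : Submodule ℂ (EuclideanSpace ℂ m),
      Module.finrank ℂ W + cnt M t = Fintype.card m ∧
      ∀ x ∈ W, ‖Matrix.toEuclideanLin M x‖ ≤ t * ‖x‖ := by
  classical
  set b := (Matrix.isHermitian_conjTranspose_mul_self M).eigenvectorBasis
  refine ⟨Submodule.span ℂ (⇑b '' ↑(Finset.univ.filter fun i => singVals M i < t)), ?_,
    fun x hx => norm_le_of_mem_small M ht hx⟩
  rw [finrank_span_basis_image b]
  have h := Finset.card_filter_add_card_filter_not
    (s := Finset.univ) (p := fun i => t ≤ singVals M i)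
  have he : Finset.univ.filter (fun i => singVals M i < t)
      = Finset.univ.filter (fun i => ¬ t ≤ singVals M i) := by
    apply Finset.filter_congr
    intro i _
    simp [not_le]
  rw [he]
  have hcnt : cnt M t = (Finset.univ.filter fun i => t ≤ singVals M i).card := rfl
  rw [hcnt]
  rw [Finset.card_univ] at h
  omega

lemma specNorm_nonneg [Nonempty m] (M : Matrix m m ℂ) : 0 ≤ specNorm M := by
  obtain ⟨i⟩ := ‹Nonempty m›
  exact (singVals_nonneg M i).trans
    (le_ciSup (Set.Finite.bddAbove (Set.finite_range _)) i)

lemma singVals_le_specNorm [Nonempty m] (M : Matrix m m ℂ) (i : m) :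
    singVals M i ≤ specNorm M :=
  le_ciSup (Set.Finite.bddAbove (Set.finite_range _)) i

lemma norm_apply_le_specNorm [Nonempty m] (M : Matrix m m ℂ) (x : EuclideanSpace ℂ m) :
    ‖Matrix.toEuclideanLin M x‖ ≤ specNorm M * ‖x‖ := by
  set b := (Matrix.isHermitian_conjTranspose_mul_self M).eigenvectorBasis
  have h1 : ‖Matrix.toEuclideanLin M x‖ ^ 2 ≤ (specNorm M * ‖x‖) ^ 2 := by
    rw [norm_sq_apply M x, show (specNorm M * ‖x‖) ^ 2 = specNorm M ^ 2 * ‖x‖ ^ 2 from by ring,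
      norm_sq_repr b, Finset.mul_sum]
    refine Finset.sum_le_sum fun j _ => ?_
    have : (Matrix.isHermitian_conjTranspose_mul_self M).eigenvalues j ≤ specNorm M ^ 2 := by
      rw [← sq_singVals]
      exact pow_le_pow_left₀ (singVals_nonneg M j) (singVals_le_specNorm M j) 2
    exact mul_le_mul_of_nonneg_right this (by positivity)
  have := Real.sqrt_le_sqrt h1
  rwa [Real.sqrt_sq (norm_nonneg _),
    Real.sqrt_sq (mul_nonneg (specNorm_nonneg M) (norm_nonneg _))] at this

lemma finrank_le_finrank_comap (f : EuclideanSpace ℂ m →ₗ[ℂ] EuclideanSpace ℂ m)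
    (W : Submodule ℂ (EuclideanSpace ℂ m)) :
    Module.finrank ℂ W ≤ Module.finrank ℂ (W.comap f) := by
  classical
  set g := W.mkQ ∘ₗ f with hg
  have hker : LinearMap.ker g = W.comap f := by
    rw [hg, LinearMap.ker_comp, Submodule.ker_mkQ]
  have h1 : Module.finrank ℂ (LinearMap.range g) + Module.finrank ℂ (LinearMap.ker g)
      = Module.finrank ℂ (EuclideanSpace ℂ m) := LinearMap.finrank_range_add_finrank_ker g
  have h2 : Module.finrank ℂ (LinearMap.range g)
      ≤ Module.finrank ℂ (EuclideanSpace ℂ m ⧸ W) := (LinearMap.range g).finrank_le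
  have h3 : Module.finrank ℂ (EuclideanSpace ℂ m ⧸ W) + Module.finrank ℂ W
      = Module.finrank ℂ (EuclideanSpace ℂ m) := W.finrank_quotient_add_finrank
  rw [hker] at h1
  omega

lemma cnt_add_le (M N : Matrix m m ℂ) {ε : ℝ} (hε : 0 < ε) :
    cnt (M + N) (3 * ε) ≤ cnt M ε + cnt N ε := by
  obtain ⟨W₁, hW₁rank, hW₁⟩ := exists_small_space M hε.le
  obtain ⟨W₂, hW₂rank, hW₂⟩ := exists_small_space N hε.le
  have hbound : ∀ x ∈ W₁ ⊓ W₂, ‖Matrix.toEuclideanLin (M + N) x‖ ≤ (2 * ε) * ‖x‖ := by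
    intro x hx
    have : Matrix.toEuclideanLin (M + N) x
        = Matrix.toEuclideanLin M x + Matrix.toEuclideanLin N x := by
      rw [map_add]; rfl
    rw [this]
    calc ‖Matrix.toEuclideanLin M x + Matrix.toEuclideanLin N x‖
        ≤ ‖Matrix.toEuclideanLin M x‖ + ‖Matrix.toEuclideanLin N x‖ := norm_add_le _ _
      _ ≤ ε * ‖x‖ + ε * ‖x‖ := add_le_add (hW₁ x hx.1) (hW₂ x hx.2)
      _ = (2 * ε) * ‖x‖ := by ring
  have hmain := cnt_add_finrank_le (M + N) (by positivity) (by linarith : 2 * ε < 3 * ε)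
    (W₁ ⊓ W₂) hbound
  have h1 : Module.finrank ℂ ↥(W₁ ⊔ W₂) + Module.finrank ℂ ↥(W₁ ⊓ W₂)
      = Module.finrank ℂ W₁ + Module.finrank ℂ W₂ :=
    Submodule.finrank_sup_add_finrank_inf_eq W₁ W₂
  have h2 : Module.finrank ℂ ↥(W₁ ⊔ W₂) ≤ Fintype.card m := by
    have := Submodule.finrank_le (W₁ ⊔ W₂)
    rwa [finrank_euclideanSpace] at this
  omega

lemma cnt_mul_left_le (M N : Matrix m m ℂ) {C ε : ℝ} (hC : 0 ≤ C) (hε : 0 < ε)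
    (hN : ∀ x, ‖Matrix.toEuclideanLin N x‖ ≤ C * ‖x‖) :
    cnt (N * M) ((C + 1) * ε) ≤ cnt M ε := by
  obtain ⟨W, hWrank, hW⟩ := exists_small_space M hε.le
  have hbound : ∀ x ∈ W, ‖Matrix.toEuclideanLin (N * M) x‖ ≤ (C * ε) * ‖x‖ := by
    intro x hx
    rw [toEuclideanLin_mul_apply]
    calc ‖Matrix.toEuclideanLin N (Matrix.toEuclideanLin M x)‖
        ≤ C * ‖Matrix.toEuclideanLin M x‖ := hN _
      _ ≤ C * (ε * ‖x‖) := mul_le_mul_of_nonneg_left (hW x hx) hC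
      _ = (C * ε) * ‖x‖ := by ring
  have hmain := cnt_add_finrank_le (N * M) (by positivity)
    (by nlinarith : C * ε < (C + 1) * ε) W hbound
  omega

lemma cnt_mul_right_le (M N : Matrix m m ℂ) {C ε : ℝ} (hC : 0 ≤ C) (hε : 0 < ε)
    (hN : ∀ x, ‖Matrix.toEuclideanLin N x‖ ≤ C * ‖x‖) :
    cnt (M * N) ((C + 1) * ε) ≤ cnt M ε := by
  obtain ⟨W, hWrank, hW⟩ := exists_small_space M hε.le
  have hbound : ∀ x ∈ W.comap (Matrix.toEuclideanLin N),
      ‖Matrix.toEuclideanLin (M * N) x‖ ≤ (C * ε) * ‖x‖ := by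
    intro x hx
    rw [toEuclideanLin_mul_apply]
    calc ‖Matrix.toEuclideanLin M (Matrix.toEuclideanLin N x)‖
        ≤ ε * ‖Matrix.toEuclideanLin N x‖ := hW _ hx
      _ ≤ ε * (C * ‖x‖) := mul_le_mul_of_nonneg_left (hN x) hε.le
      _ = (C * ε) * ‖x‖ := by ring
  have hmain := cnt_add_finrank_le (M * N) (by positivity)
    (by nlinarith : C * ε < (C + 1) * ε) (W.comap (Matrix.toEuclideanLin N)) hbound
  have hcomap := finrank_le_finrank_comap (Matrix.toEuclideanLin N) W
  omega

lemma tendsto_cnt_of_zeroDistr {d : ℕ → ℕ} (hd : StrictMono d)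
    {M : ∀ n, Matrix (Fin (d n)) (Fin (d n)) ℂ} (h : ZeroDistr d M) :
    ∀ ε : ℝ, 0 < ε → Tendsto (fun n => (cnt (M n) ε : ℝ) / d n) atTop (𝓝 0) := by
  intro ε hε
  set f : ℝ → ℝ := fun x => max (1 - |x| / ε) 0 with hf
  have hf_cont : Continuous f :=
    (continuous_const.sub (continuous_abs.div_const ε)).max continuous_const
  have hf_zero : ∀ x : ℝ, ε ≤ |x| → f x = 0 := by
    intro x hx
    apply max_eq_right
    have : 1 ≤ |x| / ε := (one_le_div hε).mpr hx
    linarith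
  have hf_le_one : ∀ x : ℝ, f x ≤ 1 := by
    intro x
    apply max_le _ zero_le_one
    have : 0 ≤ |x| / ε := div_nonneg (abs_nonneg x) hε.le
    linarith
  have hf_supp : HasCompactSupport (fun x : ℝ => ((f x : ℝ) : ℂ)) := by
    apply HasCompactSupport.intro (isCompact_Icc (a := -ε) (b := ε))
    intro x hx
    have hax : ε ≤ |x| := by
      by_contra hc
      push_neg at hc
      exact hx (Set.mem_Icc.mp (abs_le.mp hc.le) |> fun ⟨a, b⟩ => Set.mem_Icc.mpr ⟨a, b⟩)
    rw [Complex.ofReal_eq_zero]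
    exact hf_zero x hax
  have hF0 : f 0 = 1 := by simp [hf]
  have hh := h (fun x => ((f x : ℝ) : ℂ)) (Complex.continuous_ofReal.comp hf_cont) hf_supp
  have hcast : ∀ n, (d n : ℂ)⁻¹ * ∑ i, ((f (singVals (M n) i) : ℝ) : ℂ)
      = (((d n : ℝ)⁻¹ * ∑ i, f (singVals (M n) i) : ℝ) : ℂ) := fun n => by push_cast; ring
  have hg : Tendsto (fun n => (d n : ℝ)⁻¹ * ∑ i, f (singVals (M n) i)) atTop (𝓝 1) := by
    have hre := (Complex.continuous_re.tendsto _).comp hh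
    simp only [Function.comp_def, hcast, Complex.ofReal_re, hF0, Complex.ofReal_one,
      Complex.one_re] at hre
    exact hre
  apply squeeze_zero' (g := fun n => 1 - (d n : ℝ)⁻¹ * ∑ i, f (singVals (M n) i))
  · filter_upwards with n
    exact div_nonneg (Nat.cast_nonneg _) (Nat.cast_nonneg _)
  · filter_upwards [eventually_ge_atTop 1] with n hn
    have hdn : 1 ≤ d n := le_trans hn hd.le_apply
    have hD : (0 : ℝ) < d n := by exact_mod_cast Nat.lt_of_lt_of_le Nat.zero_lt_one hdn
    have hcnt_le : cnt (M n) ε ≤ d n := by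
      have := Finset.card_filter_le Finset.univ (fun i => ε ≤ singVals (M n) i)
      simpa [cnt] using this
    have hsum : ∑ i, f (singVals (M n) i) ≤ (d n : ℝ) - cnt (M n) ε := by
      have hsplit := Finset.sum_filter_add_sum_filter_not Finset.univ
        (fun i => ε ≤ singVals (M n) i) (fun i => f (singVals (M n) i))
      have h1 : ∑ i ∈ Finset.univ.filter (fun i => ε ≤ singVals (M n) i),
          f (singVals (M n) i) = 0 :=
        Finset.sum_eq_zero fun i hi => hf_zero _ (by
          rw [abs_of_nonneg (singVals_nonneg _ _)]
          exact (Finset.mem_filter.mp hi).2)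
      have h2 : ∑ i ∈ Finset.univ.filter (fun i => ¬ ε ≤ singVals (M n) i),
          f (singVals (M n) i)
          ≤ (Finset.univ.filter (fun i => ¬ ε ≤ singVals (M n) i)).card • (1 : ℝ) :=
        Finset.sum_le_card_nsmul _ _ 1 fun i _ => hf_le_one _
      have h3 := Finset.card_filter_add_card_filter_not
        (s := Finset.univ) (p := fun i => ε ≤ singVals (M n) i)
      rw [Finset.card_univ, Fintype.card_fin] at h3
      have hcard : ((Finset.univ.filter (fun i => ¬ ε ≤ singVals (M n) i)).card : ℝ)
          = (d n : ℝ) - cnt (M n) ε := by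
        have : cnt (M n) ε = (Finset.univ.filter (fun i => ε ≤ singVals (M n) i)).card := rfl
        rw [this]
        have h4 : (Finset.univ.filter (fun i => ¬ ε ≤ singVals (M n) i)).card
            = d n - (Finset.univ.filter (fun i => ε ≤ singVals (M n) i)).card := by omega
        rw [h4]
        push_cast [Nat.cast_sub (by omega : (Finset.univ.filter (fun i => ε ≤ singVals (M n) i)).card ≤ d n)]
        ring
      rw [← hsplit, h1, zero_add]
      calc ∑ i ∈ Finset.univ.filter (fun i => ¬ ε ≤ singVals (M n) i), f (singVals (M n) i)
          ≤ _ := h2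
        _ = (d n : ℝ) - cnt (M n) ε := by rw [nsmul_eq_mul, mul_one, hcard]
    have h5 : (d n : ℝ)⁻¹ * ((d n : ℝ) - cnt (M n) ε) = 1 - (cnt (M n) ε : ℝ) / d n := by
      field_simp
    have h6 := mul_le_mul_of_nonneg_left hsum (inv_nonneg.mpr hD.le)
    rw [h5] at h6
    linarith
  · have h7 : Tendsto (fun _ : ℕ => (1 : ℝ)) atTop (𝓝 1) := tendsto_const_nhds
    simpa using h7.sub hg

lemma zeroDistr_of_tendsto_cnt {d : ℕ → ℕ} (hd : StrictMono d)
    {M : ∀ n, Matrix (Fin (d n)) (Fin (d n)) ℂ}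
    (h : ∀ ε : ℝ, 0 < ε → Tendsto (fun n => (cnt (M n) ε : ℝ) / d n) atTop (𝓝 0)) :
    ZeroDistr d M := by
  intro F hF hsupp
  rw [Metric.tendsto_atTop]
  intro δ hδ
  obtain ⟨Mb, hMb⟩ : ∃ Mb : ℝ, ∀ x, ‖F x‖ ≤ Mb := by
    obtain ⟨Mb, hMb⟩ := (hF.norm.bddAbove_range_of_hasCompactSupport hsupp.norm)
    exact ⟨Mb, fun x => hMb (Set.mem_range_self x)⟩
  have hMb0 : 0 ≤ Mb := le_trans (norm_nonneg _) (hMb 0)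
  obtain ⟨ε, hε, hFε⟩ := Metric.continuousAt_iff.mp hF.continuousAt (δ / 2) (by linarith)
  set κ := δ / (2 * (2 * Mb + 1)) with hκ
  have hκpos : 0 < κ := by positivity
  obtain ⟨N₁, hN₁⟩ := Metric.tendsto_atTop.mp (h ε hε) κ hκpos
  refine ⟨max N₁ 1, fun n hn => ?_⟩
  have hn1 : 1 ≤ n := le_trans (le_max_right _ _) hn
  have hnN : N₁ ≤ n := le_trans (le_max_left _ _) hn
  have hdn : 1 ≤ d n := le_trans hn1 hd.le_apply
  have hD : (0 : ℝ) < d n := by exact_mod_cast Nat.lt_of_lt_of_le Nat.zero_lt_one hdn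
  have hdne : (d n : ℂ) ≠ 0 := by exact_mod_cast Nat.one_le_iff_ne_zero.mp hdn
  have hcnt := hN₁ n hnN
  rw [Real.dist_eq, sub_zero,
    abs_of_nonneg (div_nonneg (Nat.cast_nonneg _) (Nat.cast_nonneg _))] at hcnt
  rw [dist_eq_norm]
  have hrw : (d n : ℂ)⁻¹ * (∑ i, F (singVals (M n) i)) - F 0
      = (d n : ℂ)⁻¹ * (∑ i, (F (singVals (M n) i) - F 0)) := by
    rw [Finset.sum_sub_distrib, Finset.sum_const, Finset.card_univ, Fintype.card_fin,
      mul_sub, nsmul_eq_mul, ← mul_assoc, inv_mul_cancel₀ hdne, one_mul]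
  rw [hrw]
  have hnorm : ‖(d n : ℂ)⁻¹ * (∑ i, (F (singVals (M n) i) - F 0))‖
      ≤ (d n : ℝ)⁻¹ * ∑ i, ‖F (singVals (M n) i) - F 0‖ := by
    rw [norm_mul, norm_inv]
    have hnc : ‖(d n : ℂ)‖ = (d n : ℝ) := by
      rw [Complex.norm_natCast]
    rw [hnc]
    exact mul_le_mul_of_nonneg_left (norm_sum_le _ _) (inv_nonneg.mpr hD.le)
  have hsplit := Finset.sum_filter_add_sum_filter_not Finset.univ
    (fun i => ε ≤ singVals (M n) i) (fun i => ‖F (singVals (M n) i) - F 0‖)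
  have h1 : ∑ i ∈ Finset.univ.filter (fun i => ε ≤ singVals (M n) i),
      ‖F (singVals (M n) i) - F 0‖ ≤ (cnt (M n) ε : ℝ) * (2 * Mb) := by
    have := Finset.sum_le_card_nsmul
      (Finset.univ.filter (fun i => ε ≤ singVals (M n) i))
      (fun i => ‖F (singVals (M n) i) - F 0‖) (2 * Mb)
      (fun i _ => by
        calc ‖F (singVals (M n) i) - F 0‖ ≤ ‖F (singVals (M n) i)‖ + ‖F 0‖ := norm_sub_le _ _
          _ ≤ Mb + Mb := add_le_add (hMb _) (hMb _)
          _ = 2 * Mb := by ring)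
    rw [nsmul_eq_mul] at this
    exact this
  have h2 : ∑ i ∈ Finset.univ.filter (fun i => ¬ ε ≤ singVals (M n) i),
      ‖F (singVals (M n) i) - F 0‖ ≤ (d n : ℝ) * (δ / 2) := by
    have hstep := Finset.sum_le_card_nsmul
      (Finset.univ.filter (fun i => ¬ ε ≤ singVals (M n) i))
      (fun i => ‖F (singVals (M n) i) - F 0‖) (δ / 2)
      (fun i hi => by
        have hlt : singVals (M n) i < ε := not_le.mp (Finset.mem_filter.mp hi).2
        have hd0 : dist (singVals (M n) i) 0 < ε := by
          rw [Real.dist_eq, sub_zero, abs_of_nonneg (singVals_nonneg _ _)]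
          exact hlt
        have := hFε hd0
        rw [dist_eq_norm] at this
        exact this.le)
    rw [nsmul_eq_mul] at hstep
    refine hstep.trans ?_
    have hcard : ((Finset.univ.filter (fun i => ¬ ε ≤ singVals (M n) i)).card : ℝ) ≤ (d n : ℝ) := by
      have := Finset.card_filter_le Finset.univ (fun i => ¬ ε ≤ singVals (M n) i)
      rw [Finset.card_univ, Fintype.card_fin] at this
      exact_mod_cast this
    exact mul_le_mul_of_nonneg_right hcard (by linarith)
  have htot : (d n : ℝ)⁻¹ * ∑ i, ‖F (singVals (M n) i) - F 0‖
      ≤ (cnt (M n) ε : ℝ) / d n * (2 * Mb) + δ / 2 := by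
    rw [← hsplit]
    have hsum_le : ∑ i ∈ Finset.univ.filter (fun i => ε ≤ singVals (M n) i),
        ‖F (singVals (M n) i) - F 0‖
        + ∑ i ∈ Finset.univ.filter (fun i => ¬ ε ≤ singVals (M n) i),
        ‖F (singVals (M n) i) - F 0‖
        ≤ (cnt (M n) ε : ℝ) * (2 * Mb) + (d n : ℝ) * (δ / 2) := add_le_add h1 h2
    have := mul_le_mul_of_nonneg_left hsum_le (inv_nonneg.mpr hD.le)
    refine this.trans ?_
    rw [mul_add]
    have e1 : (d n : ℝ)⁻¹ * ((cnt (M n) ε : ℝ) * (2 * Mb)) = (cnt (M n) ε : ℝ) / d n * (2 * Mb) := by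
      ring
    have e2 : (d n : ℝ)⁻¹ * ((d n : ℝ) * (δ / 2)) = δ / 2 := by
      field_simp
    rw [e1, e2]
  have hfin : (cnt (M n) ε : ℝ) / d n * (2 * Mb) + δ / 2 < δ := by
    have hle : (cnt (M n) ε : ℝ) / d n * (2 * Mb) ≤ κ * (2 * Mb) :=
      mul_le_mul_of_nonneg_right hcnt.le (by linarith)
    have : κ * (2 * Mb) < δ / 2 := by
      rw [hκ]
      rw [div_mul_eq_mul_div, div_lt_iff₀ (by positivity)]
      nlinarith
    linarith
  calc ‖(d n : ℂ)⁻¹ * (∑ i, (F (singVals (M n) i) - F 0))‖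
      ≤ (d n : ℝ)⁻¹ * ∑ i, ‖F (singVals (M n) i) - F 0‖ := hnorm
    _ ≤ (cnt (M n) ε : ℝ) / d n * (2 * Mb) + δ / 2 := htot
    _ < δ := hfin

end ZD

/-- (i) the sum of two zero-distributed matrix-sequences is
zero-distributed; (ii) the (two-sided) product of a zero-distributed matrix-sequence
with a matrix-sequence uniformly bounded in spectral norm is zero-distributed. -/
theorem zero_distributed_add_mul (d : ℕ → ℕ) (hd : StrictMono d)
    (A B : ∀ n, Matrix (Fin (d n)) (Fin (d n)) ℂ) :
    (ZeroDistr d A → ZeroDistr d B → ZeroDistr d (fun n => A n + B n)) ∧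
    (ZeroDistr d A → (∃ C : ℝ, ∀ n, specNorm (B n) ≤ C) →
      ZeroDistr d (fun n => A n * B n) ∧ ZeroDistr d (fun n => B n * A n)) := by
  constructor
  · intro hA hB
    apply ZD.zeroDistr_of_tendsto_cnt hd
    intro ε hε
    have hA' := ZD.tendsto_cnt_of_zeroDistr hd hA (ε / 3) (by linarith)
    have hB' := ZD.tendsto_cnt_of_zeroDistr hd hB (ε / 3) (by linarith)
    have hg : Tendsto (fun n => (ZD.cnt (A n) (ε / 3) : ℝ) / d n
        + (ZD.cnt (B n) (ε / 3) : ℝ) / d n) atTop (𝓝 0) := by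
      simpa using hA'.add hB'
    refine squeeze_zero (fun n => div_nonneg (Nat.cast_nonneg _) (Nat.cast_nonneg _))
      (fun n => ?_) hg
    have hkey : ZD.cnt (A n + B n) ε ≤ ZD.cnt (A n) (ε / 3) + ZD.cnt (B n) (ε / 3) := by
      have := ZD.cnt_add_le (A n) (B n) (show 0 < ε / 3 by linarith)
      rwa [show 3 * (ε / 3) = ε by ring] at this
    have hkey' : (ZD.cnt (A n + B n) ε : ℝ)
        ≤ (ZD.cnt (A n) (ε / 3) : ℝ) + (ZD.cnt (B n) (ε / 3) : ℝ) := by exact_mod_cast hkey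
    rw [← add_div, div_eq_mul_inv, div_eq_mul_inv]
    exact mul_le_mul_of_nonneg_right hkey' (inv_nonneg.mpr (Nat.cast_nonneg _))
  · rintro hA ⟨C, hC⟩
    set C' := max C 0 with hC'def
    have hC'0 : 0 ≤ C' := le_max_right _ _
    have hC' : ∀ n, specNorm (B n) ≤ C' := fun n => (hC n).trans (le_max_left _ _)
    have hCne : C' + 1 ≠ 0 := by positivity
    have hcommon : ∀ (P : ∀ n, Matrix (Fin (d n)) (Fin (d n)) ℂ),
        (∀ n ε', 0 < ε' → 0 < d n → ZD.cnt (P n) ((C' + 1) * ε') ≤ ZD.cnt (A n) ε') →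
        ZeroDistr d P := by
      intro P hP
      apply ZD.zeroDistr_of_tendsto_cnt hd
      intro ε hε
      set ε' := ε / (C' + 1) with hε'def
      have hε' : 0 < ε' := by positivity
      have hA' := ZD.tendsto_cnt_of_zeroDistr hd hA ε' hε'
      refine squeeze_zero'
        (Filter.Eventually.of_forall fun n =>
          div_nonneg (Nat.cast_nonneg _) (Nat.cast_nonneg _)) ?_ hA'
      filter_upwards [eventually_ge_atTop 1] with n hn
      have hdn : 0 < d n := Nat.lt_of_lt_of_le Nat.zero_lt_one (le_trans hn hd.le_apply)
      have hkey := hP n ε' hε' hdn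
      rw [show (C' + 1) * ε' = ε from by rw [hε'def]; field_simp] at hkey
      have hkey' : (ZD.cnt (P n) ε : ℝ) ≤ (ZD.cnt (A n) ε' : ℝ) := by exact_mod_cast hkey
      rw [div_eq_mul_inv, div_eq_mul_inv]
      exact mul_le_mul_of_nonneg_right hkey' (inv_nonneg.mpr (Nat.cast_nonneg _))
    constructor
    · refine hcommon _ fun n ε' hε' hdn => ?_
      haveI : Nonempty (Fin (d n)) := ⟨⟨0, hdn⟩⟩
      refine ZD.cnt_mul_right_le (A n) (B n) hC'0 hε' fun x =>
        le_trans (ZD.norm_apply_le_specNorm (B n) x)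
          (mul_le_mul_of_nonneg_right (hC' n) (norm_nonneg x))
    · refine hcommon _ fun n ε' hε' hdn => ?_
      haveI : Nonempty (Fin (d n)) := ⟨⟨0, hdn⟩⟩
      refine ZD.cnt_mul_left_le (A n) (B n) hC'0 hε' fun x =>
        le_trans (ZD.norm_apply_le_specNorm (B n) x)
          (mul_le_mul_of_nonneg_right (hC' n) (norm_nonneg x))
end
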